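/- arXiv:1105.4999 — 10 statements merged into one kernel-verified Lean document; each statement's English description precedes it below -/
import Mathlib

section
/- For any positive semidefinite M×M complex matrix S, any N×M complex matrix H, and any real α with 0 < α ≤ 1, one has α · log det(I + H (S/α) Hᴴ) ≤ log det(I + H S Hᴴ), with equality when α = 1. -/
open Matrix ComplexOrder

/-!
Write `H S Hᴴ = U diag(λ) Uᴴ` with `λᵢ ≥ 0`. Both determinants are then products over the
eigenvalues, and the inequality reduces termwise to `(1 + λ/α)^α ≤ 1 + λ`, which is Bernoulli's
inequality for an exponent `α ≤ 1`.
-/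

lemma Matrix.IsHermitian.det_one_add_smul {𝕜 n : Type*} [RCLike 𝕜] [Fintype n] [DecidableEq n]
    {A : Matrix n n 𝕜} (hA : A.IsHermitian) (c : ℝ) :
    (1 + (c : 𝕜) • A).det = ((∏ i, (1 + c * hA.eigenvalues i) : ℝ) : 𝕜) := by
  set U := (hA.eigenvectorUnitary : Matrix n n 𝕜) with hUdef
  have hU : U * star U = 1 := mem_unitaryGroup_iff.mp hA.eigenvectorUnitary.2
  have hconj : 1 + (c : 𝕜) • A
      = U * diagonal (fun i => ((1 + c * hA.eigenvalues i : ℝ) : 𝕜)) * star U := by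
    have hdiag : diagonal (fun i => ((1 + c * hA.eigenvalues i : ℝ) : 𝕜))
        = 1 + (c : 𝕜) • diagonal (RCLike.ofReal ∘ hA.eigenvalues) := by
      rw [← diagonal_one, ← diagonal_smul, diagonal_add]
      congr 1
      ext i
      simp
    rw [hdiag, mul_add, add_mul, mul_one, hU, Matrix.mul_smul, Matrix.smul_mul,
      hUdef, ← Unitary.conjStarAlgAut_apply (S := 𝕜), ← hA.spectral_theorem]
  rw [hconj, det_mul_right_comm, hU, one_mul, det_diagonal, RCLike.ofReal_prod]

lemma Real.mul_log_one_add_div_le {x α : ℝ} (hx : 0 ≤ x) (h0 : 0 < α) (h1 : α ≤ 1) :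
    α * Real.log (1 + x / α) ≤ Real.log (1 + x) := by
  have hpos : 0 < 1 + x / α := by positivity
  rw [← Real.log_rpow hpos]
  refine Real.log_le_log (by positivity) ?_
  calc (1 + x / α) ^ α ≤ 1 + α * (x / α) :=
        rpow_one_add_le_one_add_mul_self (by linarith) h0.le h1
    _ = 1 + x := by field_simp

lemma Matrix.PosSemidef.mul_log_det_one_add_inv_smul_le {𝕜 n : Type*} [RCLike 𝕜] [Fintype n]
    [DecidableEq n] {A : Matrix n n 𝕜} (hA : A.PosSemidef) {α : ℝ} (h0 : 0 < α) (h1 : α ≤ 1) :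
    α * Real.log (RCLike.re (1 + ((α⁻¹ : ℝ) : 𝕜) • A).det) ≤ Real.log (RCLike.re (1 + A).det) := by
  have hnonneg : ∀ i, 0 ≤ hA.1.eigenvalues i := hA.eigenvalues_nonneg
  have hdet : (1 + A).det = ((∏ i, (1 + hA.1.eigenvalues i) : ℝ) : 𝕜) := by
    simpa using hA.1.det_one_add_smul 1
  rw [hA.1.det_one_add_smul, hdet, RCLike.ofReal_re, RCLike.ofReal_re,
    Real.log_prod fun i _ => by have := hnonneg i; positivity,
    Real.log_prod fun i _ => by have := hnonneg i; positivity, Finset.mul_sum]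
  refine Finset.sum_le_sum fun i _ => ?_
  simpa [inv_mul_eq_div] using Real.mul_log_one_add_div_le (hnonneg i) h0 h1

/-- `α log det(I + H (S/α) Hᴴ) ≤ log det(I + H S Hᴴ)` for `0 < α ≤ 1`, with equality at `α = 1`. -/
theorem stmt2 {M N : ℕ} (S : Matrix (Fin M) (Fin M) ℂ) (hS : S.PosSemidef)
    (H : Matrix (Fin N) (Fin M) ℂ) (α : ℝ) (h0 : 0 < α) (h1 : α ≤ 1) :
    α * Real.log ((1 + H * (((α : ℂ))⁻¹ • S) * Hᴴ).det.re) ≤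
      Real.log ((1 + H * S * Hᴴ).det.re) ∧
    (α = 1 → α * Real.log ((1 + H * (((α : ℂ))⁻¹ • S) * Hᴴ).det.re) =
      Real.log ((1 + H * S * Hᴴ).det.re)) := by
  refine ⟨?_, fun hα => by subst hα; simp⟩
  rw [Matrix.mul_smul, Matrix.smul_mul, ← Complex.ofReal_inv]
  exact (hS.mul_mul_conjTranspose_same H).mul_log_det_one_add_inv_smul_le h0 h1
end

section
/- The function S ↦ log det(I + H S Hᴴ) is concave on the cone of M×M Hermitian positive semidefinite matrices S, for any fixed N×M complex matrix H. -/
/-!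
Write `A = D Dᴴ` with `D` invertible and put `M = D⁻¹ B D⁻¹ᴴ ≥ 0`. Then
`t A + s B = D (t + s M) Dᴴ`, so `det (t A + s B) / det A = ∏ (t + s λᵢ)` over the eigenvalues
`λᵢ` of `M`, which by weighted AM–GM is at least `∏ λᵢ ^ s = (det B / det A) ^ s`. Hence `log det`
is concave on positive definite matrices, and `S ↦ 1 + H S Hᴴ` is an affine map sending the
positive semidefinite cone into them.
-/

open Matrix ComplexOrder

namespace Matrix

variable {𝕜 n : Type*} [RCLike 𝕜]

theorem convex_setOf_posSemidef : Convex ℝ {A : Matrix n n 𝕜 | A.PosSemidef} :=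
  fun _ hA _ hB _ _ ha hb _ => (hA.smul ha).add (hB.smul hb)

theorem convex_setOf_posDef : Convex ℝ {A : Matrix n n 𝕜 | A.PosDef} := by
  intro A hA B hB a b ha hb hab
  rcases ha.eq_or_lt with rfl | ha
  · obtain rfl : b = 1 := by simpa using hab
    simpa using hB
  · exact (hA.smul ha).add_posSemidef (hB.posSemidef.smul hb)

variable [Fintype n] [DecidableEq n]

theorem IsHermitian.det_cfc {A : Matrix n n 𝕜} (hA : A.IsHermitian) (f : ℝ → ℝ) :
    (cfc f A).det = ∏ i, (f (hA.eigenvalues i) : 𝕜) := by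
  rw [hA.cfc_eq, IsHermitian.cfc, det_map, det_diagonal]
  rfl

theorem re_det_mul_mul_conjTranspose (D X : Matrix n n 𝕜) :
    RCLike.re (D * X * Dᴴ).det = ‖D.det‖ ^ 2 * RCLike.re X.det := by
  rw [det_mul, det_mul, det_conjTranspose, mul_right_comm, RCLike.star_def, RCLike.mul_conj,
    ← RCLike.ofReal_pow, RCLike.re_ofReal_mul]

theorem PosSemidef.re_det_rpow_le {M : Matrix n n 𝕜} (hM : M.PosSemidef) {t s : ℝ}
    (ht : 0 ≤ t) (hs : 0 ≤ s) (hts : t + s = 1) :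
    RCLike.re M.det ^ s ≤ RCLike.re (t • 1 + s • M).det := by
  have hcfc : t • 1 + s • M = cfc (fun x => t + s * x) M := by
    rw [cfc_const_add _ _ _ (by fun_prop) hM.isHermitian.isSelfAdjoint,
      cfc_const_mul_id _ _ hM.isHermitian.isSelfAdjoint, Algebra.algebraMap_eq_smul_one]
  have hnonneg := hM.eigenvalues_nonneg
  rw [hcfc, hM.isHermitian.det_cfc, hM.isHermitian.det_eq_prod_eigenvalues, ← RCLike.ofReal_prod,
    ← RCLike.ofReal_prod, RCLike.ofReal_re, RCLike.ofReal_re,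
    ← Real.finsetProd_rpow _ _ fun i _ => hnonneg i]
  refine Finset.prod_le_prod (fun i _ => Real.rpow_nonneg (hnonneg i) _) fun i _ => ?_
  simpa using Real.geom_mean_le_arith_mean2_weighted ht hs zero_le_one (hnonneg i) hts

theorem PosDef.re_det_rpow_mul_re_det_rpow_le {A B : Matrix n n 𝕜} (hA : A.PosDef)
    (hB : B.PosDef) {t s : ℝ} (ht : 0 ≤ t) (hs : 0 ≤ s) (hts : t + s = 1) :
    RCLike.re A.det ^ t * RCLike.re B.det ^ s ≤ RCLike.re (t • A + s • B).det := by
  open scoped MatrixOrder in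
  obtain ⟨D, hD, rfl⟩ :=
    CStarAlgebra.isStrictlyPositive_iff_eq_mul_star_self.mp hA.isStrictlyPositive
  set M := D⁻¹ * B * D⁻¹ᴴ
  have hM : M.PosSemidef := hB.posSemidef.mul_mul_conjTranspose_same D⁻¹
  have hDinv : D * D⁻¹ = 1 := mul_nonsing_inv D ((isUnit_iff_isUnit_det D).mp hD)
  have hDinv' : D⁻¹ᴴ * Dᴴ = 1 := by rw [← conjTranspose_mul, hDinv, conjTranspose_one]
  have hBM : B = D * M * Dᴴ := by
    simp only [M, ← Matrix.mul_assoc, hDinv, Matrix.one_mul]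
    rw [Matrix.mul_assoc, hDinv', Matrix.mul_one]
  have hcomb : t • (D * star D) + s • B = D * (t • 1 + s • M) * Dᴴ := by
    rw [hBM, Matrix.mul_add, Matrix.add_mul, star_eq_conjTranspose]
    simp only [Matrix.mul_smul, Matrix.smul_mul, Matrix.mul_one, Matrix.mul_assoc]
  have hdetA : RCLike.re (D * star D).det = ‖D.det‖ ^ 2 := by
    simpa [star_eq_conjTranspose] using re_det_mul_mul_conjTranspose D 1
  rw [hcomb, re_det_mul_mul_conjTranspose, hBM, re_det_mul_mul_conjTranspose, hdetA,
    Real.mul_rpow (by positivity) (RCLike.nonneg_iff.mp hM.det_nonneg).1, ← mul_assoc,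
    ← Real.rpow_add' (by positivity) (by rw [hts]; exact one_ne_zero), hts, Real.rpow_one]
  exact mul_le_mul_of_nonneg_left (hM.re_det_rpow_le ht hs hts) (by positivity)

theorem PosDef.re_det_pos {A : Matrix n n 𝕜} (hA : A.PosDef) : 0 < RCLike.re A.det :=
  (RCLike.pos_iff.mp hA.det_pos).1

theorem concaveOn_log_re_det :
    ConcaveOn ℝ {A : Matrix n n 𝕜 | A.PosDef} fun A => Real.log (RCLike.re A.det) := by
  refine ⟨convex_setOf_posDef, fun A hA B hB a b ha hb hab => ?_⟩
  have hApos := hA.re_det_pos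
  have hBpos := hB.re_det_pos
  calc a • Real.log (RCLike.re A.det) + b • Real.log (RCLike.re B.det)
      = Real.log (RCLike.re A.det ^ a * RCLike.re B.det ^ b) := by
        rw [Real.log_mul (by positivity) (by positivity), Real.log_rpow hApos,
          Real.log_rpow hBpos, smul_eq_mul, smul_eq_mul]
    _ ≤ Real.log (RCLike.re (a • A + b • B).det) :=
        Real.log_le_log (by positivity) (hA.re_det_rpow_mul_re_det_rpow_le hB ha hb hab)

theorem concaveOn_log_re_det_one_add_mul_mul_conjTranspose {m : Type*} [Fintype m]
    (H : Matrix n m 𝕜) :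
    ConcaveOn ℝ {S : Matrix m m 𝕜 | S.PosSemidef}
      fun S => Real.log (RCLike.re (1 + H * S * Hᴴ).det) := by
  let g : Matrix m m 𝕜 →ᵃ[ℝ] Matrix n n 𝕜 := AffineMap.const ℝ _ 1 +
    ((mulRightLinearMap n ℝ Hᴴ).comp (mulLeftLinearMap m ℝ H)).toAffineMap
  refine (concaveOn_log_re_det.comp_affineMap g).subset (fun S hS => ?_) convex_setOf_posSemidef
  exact PosDef.one.add_posSemidef (hS.mul_mul_conjTranspose_same H)

end Matrix

/-- Concavity of `S ↦ log det(I + H S Hᴴ)` on the PSD cone. -/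
theorem stmt3 {M N : ℕ} (H : Matrix (Fin N) (Fin M) ℂ)
    (S1 S2 : Matrix (Fin M) (Fin M) ℂ) (h1 : S1.PosSemidef) (h2 : S2.PosSemidef)
    (t : ℝ) (ht0 : 0 ≤ t) (ht1 : t ≤ 1) :
    t * Real.log ((1 + H * S1 * Hᴴ).det.re) + (1 - t) * Real.log ((1 + H * S2 * Hᴴ).det.re) ≤
      Real.log ((1 + H * ((t : ℂ) • S1 + ((1 - t : ℝ) : ℂ) • S2) * Hᴴ).det.re) := by
  have h := (concaveOn_log_re_det_one_add_mul_mul_conjTranspose H).2 h1 h2 ht0 (sub_nonneg.2 ht1)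
    (add_sub_cancel t 1)
  simpa only [smul_eq_mul, RCLike.re_to_complex, Complex.coe_smul] using h
end

section
/- Let h, g ∈ ℂ^M be nonzero. If Q̄ ≤ |gᴴ ĥ|² P where ĥ = h/‖h‖, then the rank-one matrix S = P ĥ ĥᴴ satisfies tr(S) ≤ P, gᴴ S g ≥ Q̄, and log(1 + hᴴ S h) = log(1 + ‖h‖² P), which is the maximum of log(1 + hᴴ S h) over all PSD S with tr(S) ≤ P. -/
open Matrix ComplexOrder

/-!
For the rank-one choice `S = P ĥ ĥᴴ` every claim is arithmetic: `tr S = P ‖ĥ‖² = P`,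
`gᴴ S g = P |gᴴ ĥ|²` and `hᴴ S h = P |hᴴ ĥ|² = P ‖h‖²`. For optimality write a PSD matrix as
`S = BᴴB`; Cauchy–Schwarz on each row of `B` gives `hᴴ S h = ‖B h‖² ≤ (∑ |Bᵢⱼ|²) ‖h‖² = tr S · ‖h‖²`,
and `log` is monotone.
-/

namespace Matrix

variable {m n 𝕜 : Type*} [Fintype m] [Fintype n] [RCLike 𝕜]

lemma norm_sq_dotProduct_le (u v : n → 𝕜) :
    ‖u ⬝ᵥ v‖ ^ 2 ≤ (∑ i, ‖u i‖ ^ 2) * ∑ i, ‖v i‖ ^ 2 := by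
  have hcs := norm_inner_le_norm (𝕜 := 𝕜) (WithLp.toLp 2 (star u)) (WithLp.toLp 2 v)
  rw [EuclideanSpace.inner_toLp_toLp, star_star, dotProduct_comm] at hcs
  simpa only [mul_pow, EuclideanSpace.norm_sq_eq, PiLp.toLp_apply, Pi.star_apply, norm_star]
    using pow_le_pow_left₀ (norm_nonneg _) hcs 2

lemma re_star_dotProduct_self (v : n → 𝕜) : RCLike.re (star v ⬝ᵥ v) = ∑ i, ‖v i‖ ^ 2 := by
  simp only [dotProduct, Pi.star_apply, RCLike.star_def, RCLike.conj_mul, map_sum,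
    ← RCLike.ofReal_pow, RCLike.ofReal_re]

lemma re_trace_conjTranspose_mul_self (B : Matrix m n 𝕜) :
    RCLike.re (Bᴴ * B).trace = ∑ i, ∑ j, ‖B i j‖ ^ 2 := by
  simp only [trace, diag, mul_apply, conjTranspose_apply, map_sum, RCLike.star_def,
    RCLike.conj_mul, ← RCLike.ofReal_pow, RCLike.ofReal_re]
  exact Finset.sum_comm

lemma re_star_dotProduct_conjTranspose_mul_self_mulVec_le (B : Matrix m n 𝕜) (x : n → 𝕜) :
    RCLike.re (star x ⬝ᵥ (Bᴴ * B) *ᵥ x) ≤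
      RCLike.re (Bᴴ * B).trace * RCLike.re (star x ⬝ᵥ x) := by
  rw [← mulVec_mulVec, dotProduct_mulVec, ← star_mulVec, re_star_dotProduct_self,
    re_trace_conjTranspose_mul_self, re_star_dotProduct_self, Finset.sum_mul]
  exact Finset.sum_le_sum fun i _ => norm_sq_dotProduct_le (B i) x

open scoped MatrixOrder in
lemma PosSemidef.re_star_dotProduct_mulVec_le {S : Matrix n n 𝕜} (hS : S.PosSemidef)
    (x : n → 𝕜) :
    RCLike.re (star x ⬝ᵥ S *ᵥ x) ≤ RCLike.re S.trace * RCLike.re (star x ⬝ᵥ x) := by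
  classical
  obtain ⟨B, rfl⟩ := CStarAlgebra.nonneg_iff_eq_star_mul_self.mp hS.nonneg
  exact re_star_dotProduct_conjTranspose_mul_self_mulVec_le B x

lemma star_dotProduct_vecMulVec_mulVec (u v : n → 𝕜) :
    star v ⬝ᵥ vecMulVec u (star u) *ᵥ v = (‖star v ⬝ᵥ u‖ ^ 2 : 𝕜) := by
  rw [vecMulVec_mulVec, op_smul_eq_smul, dotProduct_smul, smul_eq_mul,
    star_dotProduct, RCLike.star_def, RCLike.conj_mul]

end Matrix

lemma EuclideanSpace.star_dotProduct_self {n 𝕜 : Type*} [Fintype n] [RCLike 𝕜]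
    (x : EuclideanSpace 𝕜 n) : star (x : n → 𝕜) ⬝ᵥ x = (‖x‖ : 𝕜) ^ 2 := by
  rw [dotProduct_comm, ← EuclideanSpace.inner_eq_star_dotProduct, inner_self_eq_norm_sq_to_K]

theorem stmt5_general {M : ℕ} (h g : EuclideanSpace ℂ (Fin M)) (hh : h ≠ 0)
    (P Qbar : ℝ)
    (hQ : Qbar ≤ Complex.normSq (star g ⬝ᵥ (((‖h‖ : ℂ))⁻¹ • h)) * P) :
    (((P : ℂ) • vecMulVec (((‖h‖ : ℂ))⁻¹ • h : Fin M → ℂ)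
        (star (((‖h‖ : ℂ))⁻¹ • h : Fin M → ℂ)) : Matrix (Fin M) (Fin M) ℂ)).trace.re ≤ P ∧
    Qbar ≤ (star g ⬝ᵥ (((P : ℂ) • vecMulVec (((‖h‖ : ℂ))⁻¹ • h : Fin M → ℂ)
        (star (((‖h‖ : ℂ))⁻¹ • h : Fin M → ℂ))) *ᵥ g)).re ∧
    Real.log (1 + (star h ⬝ᵥ (((P : ℂ) • vecMulVec (((‖h‖ : ℂ))⁻¹ • h : Fin M → ℂ)
        (star (((‖h‖ : ℂ))⁻¹ • h : Fin M → ℂ))) *ᵥ h)).re) =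
      Real.log (1 + ‖h‖ ^ 2 * P) ∧
    ∀ S' : Matrix (Fin M) (Fin M) ℂ, S'.PosSemidef → S'.trace.re ≤ P →
      Real.log (1 + (star h ⬝ᵥ (S' *ᵥ h)).re) ≤ Real.log (1 + ‖h‖ ^ 2 * P) := by
  set u : Fin M → ℂ := ((‖h‖ : ℂ))⁻¹ • h
  have hnorm : (‖h‖ : ℂ) ≠ 0 := by exact_mod_cast norm_ne_zero_iff.mpr hh
  have hdot : star (h : Fin M → ℂ) ⬝ᵥ h = (‖h‖ : ℂ) ^ 2 := EuclideanSpace.star_dotProduct_self h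
  have hu : star u ⬝ᵥ u = 1 := by
    simp only [u, star_smul, smul_dotProduct, dotProduct_smul, hdot, RCLike.star_def, map_inv₀,
      Complex.conj_ofReal, smul_eq_mul]
    field_simp
  have hhu : star (h : Fin M → ℂ) ⬝ᵥ u = ‖h‖ := by
    rw [dotProduct_smul, hdot, smul_eq_mul]
    field_simp
  have quad (v : Fin M → ℂ) :
      (star v ⬝ᵥ ((P : ℂ) • vecMulVec u (star u)) *ᵥ v).re = Complex.normSq (star v ⬝ᵥ u) * P := by
    rw [smul_mulVec, dotProduct_smul, star_dotProduct_vecMulVec_mulVec,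
      Complex.normSq_eq_norm_sq, smul_eq_mul, Complex.re_ofReal_mul, mul_comm]
    norm_cast
  refine ⟨?_, ?_, ?_, fun S hS htr => ?_⟩
  · rw [trace_smul, trace_vecMulVec, dotProduct_comm, hu]
    simp
  · rwa [quad]
  · rw [quad, hhu, Complex.normSq_ofReal, ← sq]
  · have hpos : 0 ≤ (star (h : Fin M → ℂ) ⬝ᵥ S *ᵥ h).re := hS.re_dotProduct_nonneg _
    have hle : (star (h : Fin M → ℂ) ⬝ᵥ S *ᵥ h).re ≤ S.trace.re * ‖h‖ ^ 2 := by
      simpa [hdot, ← Complex.ofReal_pow] using hS.re_star_dotProduct_mulVec_le h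
    have htr' : S.trace.re * ‖h‖ ^ 2 ≤ P * ‖h‖ ^ 2 := by gcongr
    exact Real.log_le_log (by linarith) (by linarith)

/-- If `Q̄ ≤ |gᴴĥ|²P`, MRC beamforming `S = P ĥ ĥᴴ` satisfies the power and energy
constraints and achieves the maximal rate `log(1 + ‖h‖²P)`. -/
theorem stmt5 {M : ℕ} (h g : EuclideanSpace ℂ (Fin M)) (hh : h ≠ 0) (hg : g ≠ 0)
    (P Qbar : ℝ) (hP : 0 < P) (hQ0 : 0 ≤ Qbar)
    (hQ : Qbar ≤ Complex.normSq (star g ⬝ᵥ (((‖h‖ : ℂ))⁻¹ • h)) * P) :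
    (((P : ℂ) • vecMulVec (((‖h‖ : ℂ))⁻¹ • h : Fin M → ℂ)
        (star (((‖h‖ : ℂ))⁻¹ • h : Fin M → ℂ)) : Matrix (Fin M) (Fin M) ℂ)).trace.re ≤ P ∧
    Qbar ≤ (star g ⬝ᵥ (((P : ℂ) • vecMulVec (((‖h‖ : ℂ))⁻¹ • h : Fin M → ℂ)
        (star (((‖h‖ : ℂ))⁻¹ • h : Fin M → ℂ))) *ᵥ g)).re ∧
    Real.log (1 + (star h ⬝ᵥ (((P : ℂ) • vecMulVec (((‖h‖ : ℂ))⁻¹ • h : Fin M → ℂ)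
        (star (((‖h‖ : ℂ))⁻¹ • h : Fin M → ℂ))) *ᵥ h)).re) =
      Real.log (1 + ‖h‖ ^ 2 * P) ∧
    ∀ S' : Matrix (Fin M) (Fin M) ℂ, S'.PosSemidef → S'.trace.re ≤ P →
      Real.log (1 + (star h ⬝ᵥ (S' *ᵥ h)).re) ≤ Real.log (1 + ‖h‖ ^ 2 * P) :=
  stmt5_general h g hh P Qbar hQ
end

section
/- Let h, g ∈ ℂ^M be nonzero with ĥ = h/‖h‖, ĝ = g/‖g‖, α_gh = ĝᴴ h, and h_{g⊥} = h − (ĝᴴ h) ĝ assumed nonzero. For |gᴴĥ|²P < Q̄ ≤ P‖g‖², the unit vector v = √(Q̄/(P‖g‖²)) e^{i∠α_gh} ĝ + √(1 − Q̄/(P‖g‖²)) ĥ_{g⊥} satisfies ‖v‖ = 1, |gᴴ v|² P = Q̄, and |hᴴ v|² P = (√(Q̄/‖g‖²)·|α_gh| + √(P − Q̄/‖g‖²)·√(‖h‖² − |α_gh|²))². -/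
open Matrix ComplexConjugate

/-!
Write `ĝ = g / ‖g‖` and `u = h_{g⊥} / ‖h_{g⊥}‖`. These form an orthonormal pair with
`g = ‖g‖ ĝ`, `h = α_gh ĝ + ‖h_{g⊥}‖ u` and `v = a e^{i∠α_gh} ĝ + b u`, where
`a = √(Q̄ / (P‖g‖²))` and `b = √(1 - a²)`. Every quantity in the claim is then an inner
product of two vectors in the plane of `ĝ, u`, read off coordinatewise; the phase
`e^{i∠α_gh}` is chosen so that it cancels the phase of `conj α_gh` in `hᴴ v`.
-/

theorem EuclideanSpace.star_dotProduct_eq_inner {ι : Type*} [Fintype ι]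
    (x y : EuclideanSpace ℂ ι) : star (x : ι → ℂ) ⬝ᵥ (y : ι → ℂ) = inner ℂ x y := by
  rw [EuclideanSpace.inner_eq_star_dotProduct, dotProduct_comm]

theorem Complex.conj_mul_div_norm (z : ℂ) : conj z * (z / ‖z‖) = ‖z‖ := by
  rcases eq_or_ne z 0 with rfl | hz
  · simp
  · have hz' : (‖z‖ : ℂ) ≠ 0 := by exact_mod_cast norm_ne_zero_iff.mpr hz
    rw [← mul_div_assoc, Complex.conj_mul', pow_two, mul_div_cancel_right₀ _ hz']

theorem Complex.norm_div_norm {z : ℂ} (hz : z ≠ 0) : ‖z / ‖z‖‖ = 1 := by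
  rw [norm_div, Complex.norm_real, norm_norm, div_self (norm_ne_zero_iff.mpr hz)]

section OrthonormalPair

variable {E : Type*} [NormedAddCommGroup E] [InnerProductSpace ℂ E]

theorem inner_sub_inner_smul_self {e : E} (he : ‖e‖ = 1) (x : E) :
    inner ℂ e (x - inner ℂ e x • e) = 0 := by
  simp [inner_self_eq_norm_sq_to_K, he]

variable {e₁ e₂ : E}

theorem inner_smul_add_smul_of_orthonormal (h₁ : ‖e₁‖ = 1) (h₂ : ‖e₂‖ = 1)
    (h₁₂ : inner ℂ e₁ e₂ = 0) (a b c d : ℂ) :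
    inner ℂ (a • e₁ + b • e₂) (c • e₁ + d • e₂) = conj a * c + conj b * d := by
  have h₂₁ : inner ℂ e₂ e₁ = 0 := inner_eq_zero_symm.mp h₁₂
  simp [inner_self_eq_norm_sq_to_K, h₁, h₂, h₁₂, h₂₁]
  ring

theorem norm_smul_add_smul_sq_of_orthonormal (h₁ : ‖e₁‖ = 1) (h₂ : ‖e₂‖ = 1)
    (h₁₂ : inner ℂ e₁ e₂ = 0) (a b : ℂ) :
    ‖a • e₁ + b • e₂‖ ^ 2 = ‖a‖ ^ 2 + ‖b‖ ^ 2 := by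
  have h := inner_smul_add_smul_of_orthonormal h₁ h₂ h₁₂ a b a b
  rw [inner_self_eq_norm_sq_to_K, Complex.conj_mul', Complex.conj_mul'] at h
  exact Complex.ofReal_injective (by push_cast; exact h)

theorem norm_sqrt_smul_add_sqrt_smul_of_orthonormal (h₁ : ‖e₁‖ = 1) (h₂ : ‖e₂‖ = 1)
    (h₁₂ : inner ℂ e₁ e₂ = 0) {ω : ℂ} (hω : ‖ω‖ = 1) {x : ℝ} (hx0 : 0 ≤ x) (hx1 : x ≤ 1) :
    ‖((Real.sqrt x : ℂ) * ω) • e₁ + (Real.sqrt (1 - x) : ℂ) • e₂‖ = 1 := by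
  rw [← pow_eq_one_iff_of_nonneg (norm_nonneg _) two_ne_zero,
    norm_smul_add_smul_sq_of_orthonormal h₁ h₂ h₁₂, norm_mul, hω, mul_one, Complex.norm_real,
    Complex.norm_real, Real.norm_eq_abs, Real.norm_eq_abs, sq_abs, sq_abs, Real.sq_sqrt hx0,
    Real.sq_sqrt (sub_nonneg.mpr hx1), add_sub_cancel]

end OrthonormalPair

theorem stmt6_general {M : ℕ} (h g hhat ghat hperp v : EuclideanSpace ℂ (Fin M)) (agh : ℂ)
    (hg : g ≠ 0)
    (hghat : ghat = ((‖g‖ : ℂ))⁻¹ • g)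
    (hagh : agh = star (ghat : Fin M → ℂ) ⬝ᵥ (h : Fin M → ℂ)) (hagh0 : agh ≠ 0)
    (hperp_def : hperp = h - (star (ghat : Fin M → ℂ) ⬝ᵥ (h : Fin M → ℂ)) • ghat)
    (hperp0 : hperp ≠ 0)
    (P Qbar : ℝ) (hP : 0 < P)
    (hQlo : Complex.normSq (star (g : Fin M → ℂ) ⬝ᵥ (hhat : Fin M → ℂ)) * P < Qbar)
    (hQhi : Qbar ≤ P * ‖g‖ ^ 2)
    (hv : v = ((Real.sqrt (Qbar / (P * ‖g‖ ^ 2)) : ℂ) * (agh / (‖agh‖ : ℂ))) • ghat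
        + (Real.sqrt (1 - Qbar / (P * ‖g‖ ^ 2)) : ℂ) • (((‖hperp‖ : ℂ))⁻¹ • hperp)) :
    ‖v‖ = 1 ∧
    Complex.normSq (star (g : Fin M → ℂ) ⬝ᵥ (v : Fin M → ℂ)) * P = Qbar ∧
    Complex.normSq (star (h : Fin M → ℂ) ⬝ᵥ (v : Fin M → ℂ)) * P =
      (Real.sqrt (Qbar / ‖g‖ ^ 2) * ‖agh‖ +
        Real.sqrt (P - Qbar / ‖g‖ ^ 2) * Real.sqrt (‖h‖ ^ 2 - ‖agh‖ ^ 2)) ^ 2 := by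
  simp only [EuclideanSpace.star_dotProduct_eq_inner] at hagh hperp_def hQlo ⊢
  set u := ((‖hperp‖ : ℂ))⁻¹ • hperp
  set x := Qbar / (P * ‖g‖ ^ 2) with hx
  set a := Real.sqrt x
  set b := Real.sqrt (1 - x)
  have hg0 : 0 < ‖g‖ := norm_pos_iff.mpr hg
  have hx0 : 0 ≤ x := div_nonneg
    ((mul_nonneg (Complex.normSq_nonneg _) hP.le).trans hQlo.le) (by positivity)
  have hx1 : x ≤ 1 := (div_le_one (by positivity)).mpr hQhi
  have hghat1 : ‖ghat‖ = 1 := hghat ▸ norm_smul_inv_norm hg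
  have hu : ‖u‖ = 1 := norm_smul_inv_norm hperp0
  have horth : inner ℂ ghat u = 0 := by
    rw [inner_smul_right, hperp_def, inner_sub_inner_smul_self hghat1, mul_zero]
  have hg_eq : g = (‖g‖ : ℂ) • ghat + (0 : ℂ) • u := by
    rw [hghat, zero_smul, add_zero, smul_inv_smul₀ (by exact_mod_cast hg0.ne')]
  have hh_eq : h = agh • ghat + (‖hperp‖ : ℂ) • u := by
    rw [smul_inv_smul₀ (by exact_mod_cast (norm_pos_iff.mpr hperp0).ne'), hperp_def, hagh,
      add_sub_cancel]
  have hperp_norm : ‖hperp‖ = Real.sqrt (‖h‖ ^ 2 - ‖agh‖ ^ 2) := by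
    rw [hh_eq, norm_smul_add_smul_sq_of_orthonormal hghat1 hu horth, Complex.norm_real,
      norm_norm, add_sub_cancel_left, Real.sqrt_sq (norm_nonneg _)]
  rw [hv]
  refine ⟨?_, ?_, ?_⟩
  · exact norm_sqrt_smul_add_sqrt_smul_of_orthonormal hghat1 hu horth
      (Complex.norm_div_norm hagh0) hx0 hx1
  · rw [hg_eq, inner_smul_add_smul_of_orthonormal hghat1 hu horth, Complex.conj_ofReal, map_zero,
      zero_mul, add_zero, Complex.normSq_eq_norm_sq, norm_mul, norm_mul,
      Complex.norm_div_norm hagh0, Complex.norm_real, Complex.norm_real, norm_norm, mul_one,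
      Real.norm_eq_abs, mul_pow, sq_abs, Real.sq_sqrt hx0, hx]
    field_simp
  · have hsqrt_a : Real.sqrt (Qbar / ‖g‖ ^ 2) = Real.sqrt P * a := by
      rw [← Real.sqrt_mul hP.le]; congr 1; rw [hx]; field_simp
    have hsqrt_b : Real.sqrt (P - Qbar / ‖g‖ ^ 2) = Real.sqrt P * b := by
      rw [← Real.sqrt_mul hP.le]; congr 1; rw [hx]; field_simp
    have hhv : conj agh * (a * (agh / ‖agh‖)) + conj (‖hperp‖ : ℂ) * b
        = ((a * ‖agh‖ + b * ‖hperp‖ : ℝ) : ℂ) := by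
      rw [mul_left_comm, Complex.conj_mul_div_norm, Complex.conj_ofReal]
      push_cast
      ring
    rw [hsqrt_a, hsqrt_b, ← hperp_norm, hh_eq, inner_smul_add_smul_of_orthonormal hghat1 hu horth,
      hhv, Complex.normSq_ofReal]
    linear_combination -(a * ‖agh‖ + b * ‖hperp‖) ^ 2 * Real.sq_sqrt hP.le

/-- Closed form of the optimal MISO beamformer when the energy constraint is active. -/
theorem stmt6 {M : ℕ} (h g hhat ghat hperp v : EuclideanSpace ℂ (Fin M)) (agh : ℂ)
    (hh : h ≠ 0) (hg : g ≠ 0)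
    (hhhat : hhat = ((‖h‖ : ℂ))⁻¹ • h) (hghat : ghat = ((‖g‖ : ℂ))⁻¹ • g)
    (hagh : agh = star (ghat : Fin M → ℂ) ⬝ᵥ (h : Fin M → ℂ)) (hagh0 : agh ≠ 0)
    (hperp_def : hperp = h - (star (ghat : Fin M → ℂ) ⬝ᵥ (h : Fin M → ℂ)) • ghat)
    (hperp0 : hperp ≠ 0)
    (P Qbar : ℝ) (hP : 0 < P)
    (hQlo : Complex.normSq (star (g : Fin M → ℂ) ⬝ᵥ (hhat : Fin M → ℂ)) * P < Qbar)
    (hQhi : Qbar ≤ P * ‖g‖ ^ 2)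
    (hv : v = ((Real.sqrt (Qbar / (P * ‖g‖ ^ 2)) : ℂ) * (agh / (‖agh‖ : ℂ))) • ghat
        + (Real.sqrt (1 - Qbar / (P * ‖g‖ ^ 2)) : ℂ) • (((‖hperp‖ : ℂ))⁻¹ • hperp)) :
    ‖v‖ = 1 ∧
    Complex.normSq (star (g : Fin M → ℂ) ⬝ᵥ (v : Fin M → ℂ)) * P = Qbar ∧
    Complex.normSq (star (h : Fin M → ℂ) ⬝ᵥ (v : Fin M → ℂ)) * P =
      (Real.sqrt (Qbar / ‖g‖ ^ 2) * ‖agh‖ +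
        Real.sqrt (P - Qbar / ‖g‖ ^ 2) * Real.sqrt (‖h‖ ^ 2 - ‖agh‖ ^ 2)) ^ 2 :=
  stmt6_general h g hhat ghat hperp v agh hg hghat hagh hagh0 hperp_def hperp0 P Qbar hP hQlo hQhi
    hv
end

section
/- Suppose μ, λ ≥ 0 and μ ≤ λ g₁, where g₁ = λ_max(GᴴG) > 0, and suppose v₁ is a unit eigenvector of GᴴG for eigenvalue g₁ with ‖H v₁‖² > 0. Then the supremum over PSD matrices S of log det(I + H S Hᴴ) − tr((μ I − λ GᴴG) S) is +∞. -/
open Matrix ComplexOrder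

/-!
Along the ray `S = t • v₁v₁ᴴ` the objective equals `log (1 + t ‖H v₁‖²) - t (μ - λ g₁)`: the
rank-one update has determinant `1 + t ‖H v₁‖²`, and `v₁` is an eigenvector of `μ I - λ GᴴG` for
`μ - λ g₁ ≤ 0`. So the objective is at least `log (1 + t ‖H v₁‖²)`, which is unbounded in `t`.
-/

namespace Matrix

variable {l m n : Type*} [Fintype m] [Fintype n]

theorem det_one_add_vecMulVec {R : Type*} [CommRing R] [DecidableEq n] (u v : n → R) :
    (1 + vecMulVec u v).det = 1 + v ⬝ᵥ u := by
  rw [vecMulVec_eq Unit, det_one_add_replicateCol_mul_replicateRow]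

theorem mul_vecMulVec_star_mul_conjTranspose {R : Type*} [CommRing R] [StarRing R]
    (H : Matrix l m R) (v : m → R) :
    H * vecMulVec v (star v) * Hᴴ = vecMulVec (H *ᵥ v) (star (H *ᵥ v)) := by
  rw [mul_vecMulVec, vecMulVec_mul, star_mulVec]

theorem trace_mul_vecMulVec {R : Type*} [CommRing R] (A : Matrix n n R) (v w : n → R) :
    (A * vecMulVec v w).trace = w ⬝ᵥ (A *ᵥ v) := by
  rw [mul_vecMulVec, trace_vecMulVec, dotProduct_comm]

theorem star_dotProduct_self_eq_sum_normSq (u : n → ℂ) :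
    star u ⬝ᵥ u = ((∑ i, Complex.normSq (u i) : ℝ) : ℂ) := by
  push_cast
  exact Finset.sum_congr rfl fun i _ => Complex.normSq_eq_conj_mul_self.symm

end Matrix

section RankOne

variable {m n : Type*} [Fintype m] [Fintype n]

theorem det_one_add_mul_smul_vecMulVec_mul_conjTranspose [DecidableEq n] (H : Matrix n m ℂ)
    (v : m → ℂ) (t : ℝ) :
    (1 + H * (t • vecMulVec v (star v)) * Hᴴ).det
      = ((1 + t * ∑ i, Complex.normSq ((H *ᵥ v) i) : ℝ) : ℂ) := by
  rw [Matrix.mul_smul, Matrix.smul_mul, mul_vecMulVec_star_mul_conjTranspose,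
    ← smul_vecMulVec, det_one_add_vecMulVec, dotProduct_smul, star_dotProduct_self_eq_sum_normSq]
  push_cast
  simp [Complex.real_smul]

theorem trace_mul_smul_vecMulVec_of_mulVec_eq_smul (A : Matrix m m ℂ) {v : m → ℂ} {c : ℝ}
    (hv : A *ᵥ v = (c : ℂ) • v) (hunit : ∑ i, Complex.normSq (v i) = 1) (t : ℝ) :
    (A * (t • vecMulVec v (star v))).trace = ((t * c : ℝ) : ℂ) := by
  rw [Matrix.mul_smul, trace_smul, trace_mul_vecMulVec, hv, dotProduct_smul,
    star_dotProduct_self_eq_sum_normSq, hunit]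
  push_cast
  simp [Complex.real_smul]

theorem posSemidef_smul_vecMulVec_self_star {t : ℝ} (ht : 0 ≤ t) (v : m → ℂ) :
    (t • vecMulVec v (star v)).PosSemidef :=
  (posSemidef_vecMulVec_self_star v).smul ht

end RankOne

theorem stmt8_general {M N K : ℕ} (H : Matrix (Fin N) (Fin M) ℂ) (G : Matrix (Fin K) (Fin M) ℂ)
    (μ lam g1 : ℝ) (hle : μ ≤ lam * g1)
    (v1 : Fin M → ℂ) (hunit : ∑ i, Complex.normSq (v1 i) = 1)
    (heig : (Gᴴ * G) *ᵥ v1 = (g1 : ℂ) • v1)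
    (hHv : 0 < ∑ i, Complex.normSq ((H *ᵥ v1) i)) :
    ∀ C : ℝ, ∃ S : Matrix (Fin M) (Fin M) ℂ, S.PosSemidef ∧
      C < Real.log ((1 + H * S * Hᴴ).det.re) -
        ((((μ : ℂ) • (1 : Matrix (Fin M) (Fin M) ℂ) - (lam : ℂ) • (Gᴴ * G)) * S)).trace.re := by
  intro C
  set a := ∑ i, Complex.normSq ((H *ᵥ v1) i)
  have hv1 : ((μ : ℂ) • (1 : Matrix (Fin M) (Fin M) ℂ) - (lam : ℂ) • (Gᴴ * G)) *ᵥ v1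
      = ((μ - lam * g1 : ℝ) : ℂ) • v1 := by
    rw [sub_mulVec, smul_mulVec, one_mulVec, smul_mulVec, heig, smul_smul, ← sub_smul]
    push_cast; rfl
  set t := Real.exp C / a
  have ht : 0 ≤ t := by positivity
  have hta : t * a = Real.exp C := div_mul_cancel₀ _ hHv.ne'
  refine ⟨t • vecMulVec v1 (star v1), posSemidef_smul_vecMulVec_self_star ht v1, ?_⟩
  rw [det_one_add_mul_smul_vecMulVec_mul_conjTranspose,
    trace_mul_smul_vecMulVec_of_mulVec_eq_smul _ hv1 hunit, Complex.ofReal_re,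
    Complex.ofReal_re, hta]
  have hlog : C < Real.log (1 + Real.exp C) := by
    rw [Real.lt_log_iff_exp_lt (by positivity)]; linarith
  linarith [mul_nonpos_of_nonneg_of_nonpos ht (sub_nonpos.mpr hle)]

/-- If `μ ≤ λ g₁`, the Lagrangian `log det(I + H S Hᴴ) − tr((μI − λGᴴG)S)` is
unbounded above over PSD `S`. -/
theorem stmt8 {M N K : ℕ} (H : Matrix (Fin N) (Fin M) ℂ) (G : Matrix (Fin K) (Fin M) ℂ)
    (μ lam g1 : ℝ) (hμ : 0 ≤ μ) (hlam : 0 ≤ lam) (hle : μ ≤ lam * g1) (hg1 : 0 < g1)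
    (v1 : Fin M → ℂ) (hunit : ∑ i, Complex.normSq (v1 i) = 1)
    (heig : (Gᴴ * G) *ᵥ v1 = (g1 : ℂ) • v1)
    (hmax : ∀ (w : Fin M → ℂ) (c : ℝ), (Gᴴ * G) *ᵥ w = (c : ℂ) • w → w ≠ 0 → c ≤ g1)
    (hHv : 0 < ∑ i, Complex.normSq ((H *ᵥ v1) i)) :
    ∀ C : ℝ, ∃ S : Matrix (Fin M) (Fin M) ℂ, S.PosSemidef ∧
      C < Real.log ((1 + H * S * Hᴴ).det.re) -
        ((((μ : ℂ) • (1 : Matrix (Fin M) (Fin M) ℂ) - (lam : ℂ) • (Gᴴ * G)) * S)).trace.re :=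
  stmt8_general H G μ lam g1 hle v1 hunit heig hHv
end

section
/- Let h ∈ ℂ^M be nonzero and A Hermitian positive definite, and set S* = c · A^{-1}h hᴴA^{-1} with c = (1/‖A^{-1/2}h‖² − 1/‖A^{-1/2}h‖⁴)⁺. Then log(1 + hᴴ S* h) = (2 log ‖A^{-1/2}h‖)⁺, where (x)⁺ = max(x, 0). -/
/-!
Writing `g = A^{-1/2} h` and `t = ‖g‖²`, the quadratic form `hᴴ A⁻¹ h` equals `t`, so
`hᴴ S* h = c t²`. For `t ≥ 1` this is `t - 1` and the rate is `log t`; for `t < 1` the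
coefficient `c` vanishes (at `t = 0` through `1 / 0 = 0`) and the rate is `0`.
-/

open Matrix ComplexOrder

/-- The positive square root of a positive semidefinite matrix (removed from Mathlib;
restated with its former definition). -/
noncomputable def Matrix.PosSemidef.sqrt {n 𝕜 : Type*} [Fintype n] [DecidableEq n] [RCLike 𝕜]
    {A : Matrix n n 𝕜} (hA : A.PosSemidef) : Matrix n n 𝕜 :=
  (hA.1.eigenvectorUnitary : Matrix n n 𝕜) * diagonal ((↑) ∘ (√·) ∘ hA.1.eigenvalues) *
    (star hA.1.eigenvectorUnitary : Matrix n n 𝕜)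

open scoped MatrixOrder

namespace Matrix

section StarRing

variable {m n R : Type*} [Fintype m] [Fintype n] [CommSemiring R] [StarRing R]

theorem star_dotProduct_conjTranspose_mul_self_mulVec (B : Matrix m n R) (x : n → R) :
    star x ⬝ᵥ (Bᴴ * B) *ᵥ x = star (B *ᵥ x) ⬝ᵥ (B *ᵥ x) := by
  rw [← mulVec_mulVec, dotProduct_mulVec, star_mulVec, vecMul_conjTranspose]

theorem star_dotProduct_vecMulVec_star_mulVec (u x : n → R) :
    star x ⬝ᵥ vecMulVec u (star u) *ᵥ x = (star x ⬝ᵥ u) * star (star x ⬝ᵥ u) := by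
  rw [vecMulVec_mulVec, dotProduct_smul, ← star_dotProduct, MulOpposite.smul_eq_mul_unop,
    MulOpposite.unop_op]

end StarRing

namespace PosSemidef

variable {n 𝕜 : Type*} [Fintype n] [DecidableEq n] [RCLike 𝕜] {A : Matrix n n 𝕜}

theorem sqrt_eq_cfcSqrt (hA : A.PosSemidef) : hA.sqrt = CFC.sqrt A := by
  rw [CFC.sqrt_eq_real_sqrt A hA.nonneg, cfcₙ_eq_cfc, hA.1.cfc_eq]
  rfl

theorem star_dotProduct_inv_mulVec (hA : A.PosSemidef) (x : n → 𝕜) :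
    star x ⬝ᵥ A⁻¹ *ᵥ x = star (hA.sqrt⁻¹ *ᵥ x) ⬝ᵥ (hA.sqrt⁻¹ *ᵥ x) := by
  have hS : (hA.sqrt⁻¹)ᴴ = hA.sqrt⁻¹ := by
    rw [conjTranspose_nonsing_inv, hA.sqrt_eq_cfcSqrt, (CFC.sqrt_nonneg A).posSemidef.1.eq]
  rw [← star_dotProduct_conjTranspose_mul_self_mulVec, hS, ← mul_inv_rev, hA.sqrt_eq_cfcSqrt,
    CFC.sqrt_mul_sqrt_self A hA.nonneg]

end PosSemidef

end Matrix

theorem Complex.star_dotProduct_self_eq_sum_normSq {n : Type*} [Fintype n] (v : n → ℂ) :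
    star v ⬝ᵥ v = ((∑ i, Complex.normSq (v i) : ℝ) : ℂ) := by
  simp [dotProduct, Complex.normSq_eq_conj_mul_self]

theorem Real.log_one_add_max_inv_sub_inv_sq_mul_sq {t : ℝ} (ht : 0 ≤ t) :
    Real.log (1 + max (1 / t - 1 / t ^ 2) 0 * t ^ 2) = max (Real.log t) 0 := by
  rcases le_or_gt 1 t with h1 | h1
  · have : 1 / t ^ 2 ≤ 1 / t := one_div_le_one_div_of_le (by positivity) (by nlinarith)
    rw [max_eq_left (by linarith), max_eq_left (Real.log_nonneg h1)]
    congr 1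
    field_simp
    ring
  · rcases ht.eq_or_lt with rfl | ht
    · simp
    have : 1 / t < 1 / t ^ 2 := one_div_lt_one_div_of_lt (by positivity) (by nlinarith)
    rw [max_eq_right (by linarith), max_eq_right (Real.log_nonpos ht.le h1.le)]
    simp

theorem stmt11_general {M : ℕ} (h : Fin M → ℂ)
    (A : Matrix (Fin M) (Fin M) ℂ) (hA : A.PosDef) :
    Real.log (1 + (star h ⬝ᵥ
      ((((max (1 / (∑ i, Complex.normSq (((hA.posSemidef.sqrt)⁻¹ *ᵥ h) i)) -
          1 / (∑ i, Complex.normSq (((hA.posSemidef.sqrt)⁻¹ *ᵥ h) i)) ^ 2) 0 : ℝ) : ℂ) •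
        vecMulVec (A⁻¹ *ᵥ h) (star (A⁻¹ *ᵥ h))) *ᵥ h)).re) =
      max (Real.log (∑ i, Complex.normSq (((hA.posSemidef.sqrt)⁻¹ *ᵥ h) i))) 0 := by
  set t := ∑ i, Complex.normSq ((hA.posSemidef.sqrt⁻¹ *ᵥ h) i)
  have hform : star h ⬝ᵥ A⁻¹ *ᵥ h = t := by
    rw [hA.posSemidef.star_dotProduct_inv_mulVec, Complex.star_dotProduct_self_eq_sum_normSq]
  have ht : 0 ≤ t := Finset.sum_nonneg fun i _ ↦ Complex.normSq_nonneg _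
  rw [smul_mulVec, dotProduct_smul, star_dotProduct_vecMulVec_star_mulVec, hform,
    ← Real.log_one_add_max_inv_sub_inv_sq_mul_sq ht]
  simp [sq]

/-- The optimal rank-one MISO covariance achieves rate `(2 log‖A^{-1/2}h‖)⁺`. -/
theorem stmt11 {M : ℕ} (h : Fin M → ℂ) (hh : h ≠ 0)
    (A : Matrix (Fin M) (Fin M) ℂ) (hA : A.PosDef) :
    Real.log (1 + (star h ⬝ᵥ
      ((((max (1 / (∑ i, Complex.normSq (((hA.posSemidef.sqrt)⁻¹ *ᵥ h) i)) -
          1 / (∑ i, Complex.normSq (((hA.posSemidef.sqrt)⁻¹ *ᵥ h) i)) ^ 2) 0 : ℝ) : ℂ) •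
        vecMulVec (A⁻¹ *ᵥ h) (star (A⁻¹ *ᵥ h))) *ᵥ h)).re) =
      max (Real.log (∑ i, Complex.normSq (((hA.posSemidef.sqrt)⁻¹ *ᵥ h) i))) 0 :=
  stmt11_general h A hA
end

section
/- For a SIMO channel h ∈ ℂ^N and power P > 0, for any splitting ratios ρ_i ∈ [0,1], the harvested power Q = P·Σᵢ ρᵢ|hᵢ|² and the achievable MRC rate R = log(1 + Σᵢ(1−ρᵢ)|hᵢ|² P) satisfy R = log(1 + ‖h‖²P − Q). Consequently, the set of achievable (R,Q) pairs under arbitrary power splitting equals { (R,Q) : 0 ≤ Q ≤ ‖h‖²P, R ≤ log(1 + ‖h‖²P − Q) }, and this region is already achieved by uniform splitting ρ_i = ρ for all i. -/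
/-!
Splitting a fraction `ρᵢ` of the power of antenna `i` to the harvester removes exactly the
same amount `P ρᵢ |hᵢ|²` from the SNR seen by the combiner, so the rate is
`log (1 + ‖h‖² P - Q)` whatever the split. Every split thus lies in the ideal region, and
conversely the uniform split `ρ = Q / (‖h‖² P)` reaches any point of it.
-/

open Finset Set Real

section PowerSplitting

variable {ι : Type*} [Fintype ι]

theorem sum_one_sub_mul_mul {R : Type*} [CommRing R] (ρ a : ι → R) (P : R) :
    ∑ i, (1 - ρ i) * a i * P = (∑ i, a i) * P - P * ∑ i, ρ i * a i := by
  rw [Finset.sum_mul, Finset.mul_sum, ← Finset.sum_sub_distrib]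
  exact Finset.sum_congr rfl fun i _ => by ring

theorem sum_mul_le_sum_of_mem_Icc {ρ a : ι → ℝ} (hρ : ∀ i, ρ i ∈ Icc (0 : ℝ) 1)
    (ha : ∀ i, 0 ≤ a i) : ∑ i, ρ i * a i ≤ ∑ i, a i :=
  Finset.sum_le_sum fun i _ => mul_le_of_le_one_left (ha i) (hρ i).2

/-- The rate-energy region of ideal simultaneous transfer with total gain `S` and power `P`. -/
def rateEnergyRegion (S P : ℝ) : Set (ℝ × ℝ) :=
  {p | 0 ≤ p.2 ∧ p.2 ≤ S * P ∧ p.1 ≤ log (1 + S * P - p.2)}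

def powerSplitRegion (a : ι → ℝ) (P : ℝ) : Set (ℝ × ℝ) :=
  {p | ∃ ρ : ι → ℝ, (∀ i, ρ i ∈ Icc (0 : ℝ) 1) ∧ 0 ≤ p.2 ∧
    p.2 ≤ P * ∑ i, ρ i * a i ∧ p.1 ≤ log (1 + ∑ i, (1 - ρ i) * a i * P)}

def uniformPowerSplitRegion (a : ι → ℝ) (P : ℝ) : Set (ℝ × ℝ) :=
  {p | ∃ ρ : ℝ, ρ ∈ Icc (0 : ℝ) 1 ∧ 0 ≤ p.2 ∧
    p.2 ≤ P * ∑ i, ρ * a i ∧ p.1 ≤ log (1 + ∑ i, (1 - ρ) * a i * P)}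

theorem uniformPowerSplitRegion_subset (a : ι → ℝ) (P : ℝ) :
    uniformPowerSplitRegion a P ⊆ powerSplitRegion a P :=
  fun _ ⟨ρ, hρ, hp⟩ => ⟨fun _ => ρ, fun _ => hρ, hp⟩

theorem mem_rateEnergyRegion_of_le {S P T R Q : ℝ} (hP : 0 ≤ P) (hT : T ≤ S)
    (hQ₀ : 0 ≤ Q) (hQ : Q ≤ P * T) (hR : R ≤ log (1 + S * P - P * T)) :
    (R, Q) ∈ rateEnergyRegion S P := by
  have hPT : P * T ≤ S * P := by nlinarith
  exact ⟨hQ₀, hQ.trans hPT, hR.trans (log_le_log (by linarith) (by linarith))⟩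

theorem powerSplitRegion_subset {a : ι → ℝ} {P : ℝ} (ha : ∀ i, 0 ≤ a i) (hP : 0 ≤ P) :
    powerSplitRegion a P ⊆ rateEnergyRegion (∑ i, a i) P := by
  rintro ⟨R, Q⟩ ⟨ρ, hρ, hQ₀, hQ, hR⟩
  rw [sum_one_sub_mul_mul, ← add_sub_assoc] at hR
  exact mem_rateEnergyRegion_of_le hP (sum_mul_le_sum_of_mem_Icc hρ ha) hQ₀ hQ hR

theorem rateEnergyRegion_subset (a : ι → ℝ) (P : ℝ) :
    rateEnergyRegion (∑ i, a i) P ⊆ uniformPowerSplitRegion a P := by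
  rintro ⟨R, Q⟩ ⟨hQ₀, hQ, hR⟩
  set S := ∑ i, a i
  have hSP : 0 ≤ S * P := hQ₀.trans hQ
  -- when `S * P = 0` also `Q = 0`, so the junk value `Q / 0 = 0` is still the right ratio
  have hρQ : Q / (S * P) * (S * P) = Q :=
    div_mul_cancel_of_imp fun h0 => le_antisymm (h0 ▸ hQ) hQ₀
  have hharvest : P * ∑ i, Q / (S * P) * a i = Q := by
    rw [← Finset.mul_sum]; linear_combination hρQ
  refine ⟨Q / (S * P), ⟨div_nonneg hQ₀ hSP, div_le_one_of_le₀ hQ hSP⟩, hQ₀,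
    hharvest.ge, ?_⟩
  rwa [sum_one_sub_mul_mul, hharvest, ← add_sub_assoc]

end PowerSplitting

/-- SIMO power splitting: rate-energy identity and equality of the power-splitting,
uniform-power-splitting, and ideal rate-energy regions. -/
theorem stmt14 {N : ℕ} (h : Fin N → ℂ) (P : ℝ) (hP : 0 < P) :
    (∀ ρ : Fin N → ℝ, (∀ i, ρ i ∈ Set.Icc (0 : ℝ) 1) →
      Real.log (1 + ∑ i, (1 - ρ i) * Complex.normSq (h i) * P) =
        Real.log (1 + (∑ i, Complex.normSq (h i)) * P -
          P * ∑ i, ρ i * Complex.normSq (h i))) ∧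
    {p : ℝ × ℝ | ∃ ρ : Fin N → ℝ, (∀ i, ρ i ∈ Set.Icc (0 : ℝ) 1) ∧ 0 ≤ p.2 ∧
        p.2 ≤ P * ∑ i, ρ i * Complex.normSq (h i) ∧
        p.1 ≤ Real.log (1 + ∑ i, (1 - ρ i) * Complex.normSq (h i) * P)} =
      {p : ℝ × ℝ | 0 ≤ p.2 ∧ p.2 ≤ (∑ i, Complex.normSq (h i)) * P ∧
        p.1 ≤ Real.log (1 + (∑ i, Complex.normSq (h i)) * P - p.2)} ∧
    {p : ℝ × ℝ | ∃ ρ : ℝ, ρ ∈ Set.Icc (0 : ℝ) 1 ∧ 0 ≤ p.2 ∧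
        p.2 ≤ P * ∑ i, ρ * Complex.normSq (h i) ∧
        p.1 ≤ Real.log (1 + ∑ i, (1 - ρ) * Complex.normSq (h i) * P)} =
      {p : ℝ × ℝ | 0 ≤ p.2 ∧ p.2 ≤ (∑ i, Complex.normSq (h i)) * P ∧
        p.1 ≤ Real.log (1 + (∑ i, Complex.normSq (h i)) * P - p.2)} := by
  set a : Fin N → ℝ := fun i => Complex.normSq (h i)
  have ha : ∀ i, 0 ≤ a i := fun i => Complex.normSq_nonneg (h i)
  have hsplit := powerSplitRegion_subset ha hP.le
  have hideal := rateEnergyRegion_subset a P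
  have huniform := uniformPowerSplitRegion_subset a P
  refine ⟨fun ρ _ => by rw [sum_one_sub_mul_mul, ← add_sub_assoc], ?_, ?_⟩
  · exact Subset.antisymm hsplit (hideal.trans huniform)
  · exact Subset.antisymm (huniform.trans hsplit) hideal
end

section
/- In the SISO power-splitting scheme with no antenna noise (σ_A²=0, σ_P²=1), channel gain h > 0 and power P > 0, the achievable rate-energy region ⋃_{ρ∈[0,1]} {(R,Q): R ≤ log(1+(1−ρ)Ph), Q ≤ ρPh} equals the region {(R,Q): 0 ≤ Q ≤ Ph, R ≤ log(1 + Ph − Q)} achieved by the time-switching scheme with flexible power constraint. -/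
open Real

/-- `c` stands for the received power `P h`; a fraction `ρ` of it is harvested. -/
def powerSplittingRegion (c : ℝ) : Set (ℝ × ℝ) :=
  {p | ∃ ρ : ℝ, 0 ≤ ρ ∧ ρ ≤ 1 ∧ p.1 ≤ log (1 + (1 - ρ) * c) ∧ 0 ≤ p.2 ∧ p.2 ≤ ρ * c}

def flexibleTimeSwitchingRegion (c : ℝ) : Set (ℝ × ℝ) :=
  {p | 0 ≤ p.2 ∧ p.2 ≤ c ∧ p.1 ≤ log (1 + c - p.2)}

lemma powerSplittingRegion_subset {c : ℝ} (hc : 0 ≤ c) :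
    powerSplittingRegion c ⊆ flexibleTimeSwitchingRegion c := by
  rintro ⟨R, Q⟩ ⟨ρ, hρ0, hρ1, hR, hQ0, hQ⟩
  have hρc : ρ * c ≤ c := mul_le_of_le_one_left hc hρ1
  refine ⟨hQ0, hQ.trans hρc, hR.trans (log_le_log ?_ ?_)⟩ <;> nlinarith

lemma flexibleTimeSwitchingRegion_subset {c : ℝ} (hc : 0 ≤ c) :
    flexibleTimeSwitchingRegion c ⊆ powerSplittingRegion c := by
  rintro ⟨R, Q⟩ ⟨hQ0, hQc, hR⟩
  -- Harvest exactly `Q`; when `c = 0` also `Q = 0`, so the junk value `Q / 0 = 0` is still right.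
  have hρc : Q / c * c = Q := div_mul_cancel_of_imp fun h => le_antisymm (h ▸ hQc) hQ0
  refine ⟨Q / c, div_nonneg hQ0 hc, div_le_one_of_le₀ hQc hc, ?_, hQ0, hρc.ge⟩
  calc R ≤ log (1 + c - Q) := hR
    _ = log (1 + (1 - Q / c) * c) := by rw [sub_mul, one_mul, hρc, add_sub_assoc]

theorem powerSplittingRegion_eq {c : ℝ} (hc : 0 ≤ c) :
    powerSplittingRegion c = flexibleTimeSwitchingRegion c :=
  (powerSplittingRegion_subset hc).antisymm (flexibleTimeSwitchingRegion_subset hc)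

/-- In the SISO case with no antenna noise, the power-splitting rate-energy region
equals the flexible time-switching region. -/
theorem stmt16 (hgain P : ℝ) (hh : 0 < hgain) (hP : 0 < P) :
    {p : ℝ × ℝ | ∃ ρ : ℝ, 0 ≤ ρ ∧ ρ ≤ 1 ∧
        p.1 ≤ Real.log (1 + (1 - ρ) * P * hgain) ∧ 0 ≤ p.2 ∧ p.2 ≤ ρ * P * hgain} =
      {p : ℝ × ℝ | 0 ≤ p.2 ∧ p.2 ≤ P * hgain ∧
        p.1 ≤ Real.log (1 + P * hgain - p.2)} := by
  have h := powerSplittingRegion_eq (mul_pos hP hh).le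
  simp only [powerSplittingRegion, flexibleTimeSwitchingRegion] at h
  simpa only [mul_assoc] using h
end

section
/- In the time-switching scheme with flexible power constraint, for any fixed harvested power Q with 0 ≤ Q ≤ h₁P, the minimum average transmit energy needed in the energy-harvesting slot of duration fraction α ∈ (0,1] to harvest Q is Q/h₁, independent of α; consequently the achievable information rate (1−α)·log det(I + H S₁ Hᴴ) subject to (1−α)·tr(S₁) ≤ P − Q/h₁ is maximized in the limit α → 0, and the supremum of achievable rates equals max{ log det(I + H S Hᴴ) : tr(S) ≤ P − Q/h₁, S ⪰ 0 }. -/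
/-!
The energy beam `S₂ = q v₁v₁ᴴ` satisfies `HᴴH S₂ = h₁ S₂`, so `tr (H S₂ Hᴴ) = h₁ tr S₂` and
harvesting `Q` costs exactly `Q / h₁`. For the rates, replacing `S₁` by `(1 - α) S₁` turns a
time-switching point into a single-slot point of no smaller rate, since for `A ⪰ 0` the map
`t ↦ log det (I + t A) = ∑ᵢ log (1 + t λᵢ)` is concave and vanishes at `0`; conversely, letting
`α → 0` the time-switching rates `(1 - α) log det (I + H S Hᴴ)` approach every single-slot rate.
-/

open Matrix ComplexOrder Filter Topology Set

theorem Real.sSup_eq_sSup_of_forall_exists_le_of_forall_exists_sub_le {s t : Set ℝ}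
    (hs : ∀ x ∈ s, ∃ y ∈ t, x ≤ y) (ht : ∀ y ∈ t, ∀ ε > 0, ∃ x ∈ s, y - ε ≤ x) :
    sSup s = sSup t := by
  by_cases ht_bdd : BddAbove t
  · have hs_bdd : BddAbove s := by
      obtain ⟨b, hb⟩ := ht_bdd
      exact ⟨b, fun x hx => (hs x hx).elim fun y ⟨hy, hxy⟩ => hxy.trans (hb hy)⟩
    rcases t.eq_empty_or_nonempty with rfl | ⟨y₀, hy₀⟩
    · rw [eq_empty_of_forall_notMem fun x hx => (hs x hx).elim fun _ h => h.1]
    have hs_ne : s.Nonempty := (ht y₀ hy₀ 1 one_pos).elim fun x h => ⟨x, h.1⟩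
    refine le_antisymm (csSup_le hs_ne fun x hx => ?_)
      (csSup_le ⟨y₀, hy₀⟩ fun y hy => le_of_forall_sub_le fun ε hε => ?_)
    · obtain ⟨y, hy, hxy⟩ := hs x hx
      exact le_csSup_of_le ht_bdd hy hxy
    · obtain ⟨x, hx, hyx⟩ := ht y hy ε hε
      exact le_csSup_of_le hs_bdd hx hyx
  · have hs_bdd : ¬BddAbove s := by
      rintro ⟨b, hb⟩
      refine ht_bdd ⟨b + 1, fun y hy => ?_⟩
      obtain ⟨x, hx, hyx⟩ := ht y hy 1 one_pos
      linarith [hb hx]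
    rw [Real.sSup_of_not_bddAbove hs_bdd, Real.sSup_of_not_bddAbove ht_bdd]

theorem Real.mul_log_one_add_le_log_one_add_mul {x t : ℝ} (hx : -1 < x) (ht₀ : 0 ≤ t)
    (ht₁ : t ≤ 1) : t * Real.log (1 + x) ≤ Real.log (1 + t * x) := by
  have h := strictConcaveOn_log_Ioi.concaveOn.2 (mem_Ioi.2 one_pos)
    (mem_Ioi.2 (by linarith : 0 < 1 + x)) (sub_nonneg.2 ht₁) ht₀ (sub_add_cancel 1 t)
  simp only [smul_eq_mul, Real.log_one, mul_zero, zero_add] at h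
  rwa [show (1 - t) * 1 + t * (1 + x) = 1 + t * x by ring] at h

theorem exists_mem_Ioo_sub_lt_one_sub_mul (L : ℝ) {ε : ℝ} (hε : 0 < ε) :
    ∃ α ∈ Ioo (0 : ℝ) 1, L - ε < (1 - α) * L := by
  have hcont : Continuous fun α : ℝ => (1 - α) * L := by fun_prop
  have hlim : Tendsto (fun α : ℝ => (1 - α) * L) (𝓝[>] 0) (𝓝 L) := by
    simpa using (hcont.tendsto 0).mono_left nhdsWithin_le_nhds
  have hIoo : ∀ᶠ α in 𝓝[>] (0 : ℝ), α ∈ Ioo 0 1 := Ioo_mem_nhdsGT one_pos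
  exact (hIoo.and (hlim.eventually (lt_mem_nhds (by linarith)))).exists

namespace Matrix

variable {𝕜 m n : Type*} [RCLike 𝕜] [Fintype m] [Fintype n]

theorem trace_mul_mul_conjTranspose_of_mul_eq_smul {H : Matrix m n 𝕜} {S : Matrix n n 𝕜} {c : 𝕜}
    (h : Hᴴ * H * S = c • S) : (H * S * Hᴴ).trace = c * S.trace := by
  rw [trace_mul_cycle, h, trace_smul, smul_eq_mul]

variable [DecidableEq m]

theorem IsHermitian.det_one_add_smul_s17 {A : Matrix m m 𝕜} (hA : A.IsHermitian) (t : ℝ) :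
    (1 + t • A).det = ∏ i, ((1 + t * hA.eigenvalues i : ℝ) : 𝕜) := by
  have h : 1 + t • A = cfc (fun x : ℝ => 1 + t * x) A := by
    rw [cfc_add .., cfc_const_mul .., cfc_const_one .., cfc_id' ..]
  rw [h, hA.cfc_eq]
  simp [IsHermitian.cfc, -Unitary.conjStarAlgAut_apply]

theorem PosSemidef.mul_log_det_one_add_le {A : Matrix m m 𝕜} (hA : A.PosSemidef) {t : ℝ}
    (ht₀ : 0 ≤ t) (ht₁ : t ≤ 1) :
    t * Real.log (RCLike.re (1 + A).det) ≤ Real.log (RCLike.re (1 + t • A).det) := by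
  have hpos : ∀ s : ℝ, 0 ≤ s → ∀ i ∈ Finset.univ, 1 + s * hA.1.eigenvalues i ≠ 0 :=
    fun s hs i _ => by nlinarith [hA.eigenvalues_nonneg i]
  conv_lhs => rw [← one_smul ℝ A]
  simp only [hA.1.det_one_add_smul_s17, ← RCLike.ofReal_prod, RCLike.ofReal_re]
  rw [Real.log_prod (hpos 1 zero_le_one), Real.log_prod (hpos t ht₀), Finset.mul_sum]
  refine Finset.sum_le_sum fun i _ => ?_
  rw [one_mul]
  exact Real.mul_log_one_add_le_log_one_add_mul (by linarith [hA.eigenvalues_nonneg i]) ht₀ ht₁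

theorem sSup_one_sub_mul_log_det_eq_sSup_log_det (H : Matrix m n 𝕜) (P : ℝ) :
    sSup {r : ℝ | ∃ (α : ℝ) (S : Matrix n n 𝕜), 0 < α ∧ α < 1 ∧ S.PosSemidef ∧
        (1 - α) * RCLike.re S.trace ≤ P ∧
        r = (1 - α) * Real.log (RCLike.re (1 + H * S * Hᴴ).det)} =
      sSup {r : ℝ | ∃ S : Matrix n n 𝕜, S.PosSemidef ∧ RCLike.re S.trace ≤ P ∧
        r = Real.log (RCLike.re (1 + H * S * Hᴴ).det)} := by
  apply Real.sSup_eq_sSup_of_forall_exists_le_of_forall_exists_sub_le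
  · rintro _ ⟨α, S, hα₀, hα₁, hS, htr, rfl⟩
    refine ⟨_, ⟨(1 - α) • S, hS.smul (sub_nonneg.2 hα₁.le), ?_, rfl⟩, ?_⟩
    · rwa [trace_smul, RCLike.smul_re]
    · rw [Matrix.mul_smul, Matrix.smul_mul]
      exact (hS.mul_mul_conjTranspose_same H).mul_log_det_one_add_le (by linarith) (by linarith)
  · rintro _ ⟨S, hS, htr, rfl⟩ ε hε
    obtain ⟨α, ⟨hα₀, hα₁⟩, hαL⟩ := exists_mem_Ioo_sub_lt_one_sub_mul
      (Real.log (RCLike.re (1 + H * S * Hᴴ).det)) hε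
    refine ⟨_, ⟨α, S, hα₀, hα₁, hS, ?_, rfl⟩, hαL.le⟩
    have := RCLike.nonneg_iff.1 hS.trace_nonneg
    nlinarith

end Matrix

theorem stmt17_general {M N : ℕ} (H : Matrix (Fin N) (Fin M) ℂ) (h1 P Q : ℝ)
    (hh1 : 0 < h1)
    (v1 : Fin M → ℂ)
    (heig : (Hᴴ * H) *ᵥ v1 = (h1 : ℂ) • v1) :
    (∀ α q : ℝ, 0 < α → α ≤ 1 → 0 ≤ q →
      α * (H * ((q : ℂ) • vecMulVec v1 (star v1)) * Hᴴ).trace.re = Q →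
      α * (((q : ℂ) • vecMulVec v1 (star v1) : Matrix (Fin M) (Fin M) ℂ)).trace.re = Q / h1) ∧
    sSup {r : ℝ | ∃ (α : ℝ) (S1 : Matrix (Fin M) (Fin M) ℂ), 0 < α ∧ α < 1 ∧
        S1.PosSemidef ∧ (1 - α) * S1.trace.re ≤ P - Q / h1 ∧
        r = (1 - α) * Real.log ((1 + H * S1 * Hᴴ).det.re)} =
      sSup {r : ℝ | ∃ S : Matrix (Fin M) (Fin M) ℂ, S.PosSemidef ∧
        S.trace.re ≤ P - Q / h1 ∧ r = Real.log ((1 + H * S * Hᴴ).det.re)} := by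
  refine ⟨fun α q _ _ _ hQ => ?_, sSup_one_sub_mul_log_det_eq_sSup_log_det H (P - Q / h1)⟩
  have hS : Hᴴ * H * ((q : ℂ) • vecMulVec v1 (star v1)) =
      (h1 : ℂ) • ((q : ℂ) • vecMulVec v1 (star v1)) := by
    rw [Matrix.mul_smul, mul_vecMulVec, heig, smul_vecMulVec, smul_comm]
  rw [trace_mul_mul_conjTranspose_of_mul_eq_smul hS, Complex.re_ofReal_mul] at hQ
  rw [eq_div_iff hh1.ne', ← hQ]
  ring

/-- Time switching with flexible power: the energy spent to harvest `Q` is `Q/h₁`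
independent of `α`, and the supremum of achievable rates equals the maximal rate
with transmit power `P − Q/h₁`. -/
theorem stmt17 {M N : ℕ} (H : Matrix (Fin N) (Fin M) ℂ) (h1 P Q : ℝ)
    (hP : 0 < P) (hh1 : 0 < h1)
    (v1 : Fin M → ℂ) (hunit : ∑ i, Complex.normSq (v1 i) = 1)
    (heig : (Hᴴ * H) *ᵥ v1 = (h1 : ℂ) • v1)
    (hmax : ∀ (w : Fin M → ℂ) (c : ℝ), (Hᴴ * H) *ᵥ w = (c : ℂ) • w → w ≠ 0 → c ≤ h1)
    (hQ0 : 0 ≤ Q) (hQ : Q ≤ h1 * P) :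
    (∀ α q : ℝ, 0 < α → α ≤ 1 → 0 ≤ q →
      α * (H * ((q : ℂ) • vecMulVec v1 (star v1)) * Hᴴ).trace.re = Q →
      α * (((q : ℂ) • vecMulVec v1 (star v1) : Matrix (Fin M) (Fin M) ℂ)).trace.re = Q / h1) ∧
    sSup {r : ℝ | ∃ (α : ℝ) (S1 : Matrix (Fin M) (Fin M) ℂ), 0 < α ∧ α < 1 ∧
        S1.PosSemidef ∧ (1 - α) * S1.trace.re ≤ P - Q / h1 ∧
        r = (1 - α) * Real.log ((1 + H * S1 * Hᴴ).det.re)} =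
      sSup {r : ℝ | ∃ S : Matrix (Fin M) (Fin M) ℂ, S.PosSemidef ∧
        S.trace.re ≤ P - Q / h1 ∧ r = Real.log ((1 + H * S * Hᴴ).det.re)} :=
  stmt17_general H h1 P Q hh1 v1 heig
end

section
/- Suppose P ≤ 1/h₂ − 1/h₁ with h₁ ≥ h₂ > 0 the top two eigenvalues of HᴴH. Then for every harvested power Q ∈ [0, h₁P], the uniform power splitting scheme with ρ = Q/(h₁P) and rank-one covariance S = P v₁v₁ᴴ (v₁ a top unit eigenvector of HᴴH) harvests exactly ρ·tr(H S Hᴴ) = Q and achieves rate log(1 + (1−ρ)h₁P) = log(1 + h₁P − Q), which equals the maximal time-switching (flexible power) rate max{log det(I + H S' Hᴴ) : tr(S') ≤ P − Q/h₁}. Hence the uniform-power-splitting and flexible time-switching rate-energy regions coincide in this regime. -/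
/-!
With `S = P v₁v₁ᴴ` the matrix `H S Hᴴ` is rank one with trace `h₁P`, so the harvested power and
the rate are scalar computations, and `(P - Q/h₁) v₁v₁ᴴ` attains `log (1 + h₁P - Q)` in the
time-switching problem.

For the converse, diagonalise `HᴴH = U diag(λ) Uᴴ`: then `det (I + H S Hᴴ) = det (I + T diag λ)`
with `T = Uᴴ S U ⪰ 0` and `tr T = tr S`. Writing `T = BᴴB` and adding the rank-one terms
`λᵢ bᵢbᵢᴴ` one at a time (matrix determinant lemma and `(I + X)⁻¹ ⪯ I`) gives the Hadamard-type
bound `det ≤ ∏ (1 + λᵢ Tᵢᵢ)`. At most one eigenvalue exceeds `h₂`, since two of them would span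
an `h₁`-eigenvector orthogonal to `v₁`. Finally, when `a + b ≤ 1/h₂ - 1/h₁`,
`(1 + h₁a)(1 + h₂b) ≤ 1 + h₁(a + b)`, which absorbs every factor of the product into the top one:
`∏ (1 + λᵢ Tᵢᵢ) ≤ 1 + h₁ tr S`.
-/

open Matrix ComplexOrder

theorem one_add_mul_mul_one_add_mul_le {h₁ h₂ a b l : ℝ} (hh₁ : 0 < h₁) (hh₂ : 0 < h₂)
    (ha : 0 ≤ a) (hcap : a ≤ 1 / h₂ - 1 / h₁) (hb : 0 ≤ b) (hl : l ≤ h₂) :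
    (1 + h₁ * a) * (1 + l * b) ≤ 1 + h₁ * (a + b) := by
  have key : h₁ * h₂ * a ≤ h₁ - h₂ := by
    calc h₁ * h₂ * a ≤ h₁ * h₂ * (1 / h₂ - 1 / h₁) := by gcongr
      _ = h₁ - h₂ := by field_simp
  have hlb : (1 + h₁ * a) * (l * b) ≤ (1 + h₁ * a) * (h₂ * b) := by gcongr
  nlinarith [mul_le_mul_of_nonneg_right key hb]

theorem one_add_mul_mul_prod_le {ι : Type*} {h₁ h₂ : ℝ} (hh₁ : 0 < h₁) (hh₂ : 0 < h₂)
    (l q : ι → ℝ) (s : Finset ι) (hl : ∀ i ∈ s, 0 ≤ l i ∧ l i ≤ h₂) (hq : ∀ i ∈ s, 0 ≤ q i)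
    {a : ℝ} (ha : 0 ≤ a) (hcap : a + ∑ i ∈ s, q i ≤ 1 / h₂ - 1 / h₁) :
    (1 + h₁ * a) * ∏ i ∈ s, (1 + l i * q i) ≤ 1 + h₁ * (a + ∑ i ∈ s, q i) := by
  classical
  induction s using Finset.induction_on generalizing a with
  | empty => simp
  | insert j s hj ih =>
    simp only [Finset.mem_insert, forall_eq_or_imp] at hl hq
    rw [Finset.sum_insert hj, ← add_assoc] at hcap ⊢
    have hs : 0 ≤ ∑ i ∈ s, q i := Finset.sum_nonneg hq.2
    have hprod : 0 ≤ ∏ i ∈ s, (1 + l i * q i) := Finset.prod_nonneg fun i hi => by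
      nlinarith [mul_nonneg (hl.2 i hi).1 (hq.2 i hi)]
    calc (1 + h₁ * a) * ∏ i ∈ insert j s, (1 + l i * q i)
        = (1 + h₁ * a) * (1 + l j * q j) * ∏ i ∈ s, (1 + l i * q i) := by
          rw [Finset.prod_insert hj, mul_assoc]
      _ ≤ (1 + h₁ * (a + q j)) * ∏ i ∈ s, (1 + l i * q i) := by
          gcongr
          exact one_add_mul_mul_one_add_mul_le hh₁ hh₂ ha (by linarith) hq.1 hl.1.2
      _ ≤ 1 + h₁ * (a + q j + ∑ i ∈ s, q i) :=
          ih hl.2 hq.2 (add_nonneg ha hq.1) hcap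

theorem prod_one_add_mul_le {ι : Type*} [Fintype ι] [DecidableEq ι] {h₁ h₂ : ℝ} (hh₁ : 0 < h₁)
    (hh₂ : 0 < h₂) (l q : ι → ℝ) (hl : ∀ i, 0 ≤ l i) (hq : ∀ i, 0 ≤ q i) (i₀ : ι)
    (hi₀ : l i₀ ≤ h₁) (hne : ∀ i ≠ i₀, l i ≤ h₂) (hcap : ∑ i, q i ≤ 1 / h₂ - 1 / h₁) :
    ∏ i, (1 + l i * q i) ≤ 1 + h₁ * ∑ i, q i := by
  rw [← Finset.add_sum_erase _ _ (Finset.mem_univ i₀)] at hcap ⊢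
  rw [← Finset.mul_prod_erase _ _ (Finset.mem_univ i₀)]
  have hprod : 0 ≤ ∏ i ∈ Finset.univ.erase i₀, (1 + l i * q i) :=
    Finset.prod_nonneg fun i _ => by nlinarith [mul_nonneg (hl i) (hq i)]
  calc (1 + l i₀ * q i₀) * ∏ i ∈ Finset.univ.erase i₀, (1 + l i * q i)
      ≤ (1 + h₁ * q i₀) * ∏ i ∈ Finset.univ.erase i₀, (1 + l i * q i) := by
        gcongr
        exact hq i₀
      _ ≤ _ := one_add_mul_mul_prod_le hh₁ hh₂ l q _
        (fun i hi => ⟨hl i, hne i (Finset.ne_of_mem_erase hi)⟩) (fun i _ => hq i) (hq i₀) hcap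

namespace Matrix

variable {n : Type*} [Fintype n]

theorem IsHermitian.star_dotProduct_eq_zero_of_mulVec_eq_smul {A : Matrix n n ℂ}
    (hA : A.IsHermitian) {a b : ℝ} {v w : n → ℂ} (hv : A *ᵥ v = (a : ℂ) • v)
    (hw : A *ᵥ w = (b : ℂ) • w) (hab : a ≠ b) : star v ⬝ᵥ w = 0 := by
  have hvA : star v ᵥ* A = (a : ℂ) • star v := by
    rw [← hA.eq, ← star_mulVec, hv, star_smul, Complex.star_def, Complex.conj_ofReal]
  have h : ((a : ℂ) - b) * (star v ⬝ᵥ w) = 0 := by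
    rw [sub_mul, ← smul_eq_mul, ← smul_dotProduct, ← hvA, ← dotProduct_mulVec, hw,
      dotProduct_smul, smul_eq_mul, sub_self]
  exact (mul_eq_zero.1 h).resolve_left (sub_ne_zero.2 (Complex.ofReal_injective.ne hab))

theorem star_dotProduct_mulVec_eq_of_mulVec_eq_smul {A : Matrix n n ℂ} {c : ℂ} {v : n → ℂ}
    (hv : A *ᵥ v = c • v) (hunit : star v ⬝ᵥ v = 1) : star v ⬝ᵥ A *ᵥ v = c := by
  rw [hv, dotProduct_smul, hunit, smul_eq_mul, mul_one]

theorem mul_smul_vecMulVec_star_mul_conjTranspose {m : Type*} (H : Matrix m n ℂ) (c : ℂ)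
    (v : n → ℂ) :
    H * (c • vecMulVec v (star v)) * Hᴴ = c • vecMulVec (H *ᵥ v) (star (H *ᵥ v)) := by
  rw [Matrix.mul_smul, Matrix.smul_mul, mul_vecMulVec, vecMulVec_mul, star_mulVec]

theorem star_mulVec_dotProduct_mulVec {m : Type*} [Fintype m] (H : Matrix m n ℂ) (v : n → ℂ) :
    star (H *ᵥ v) ⬝ᵥ H *ᵥ v = star v ⬝ᵥ (Hᴴ * H) *ᵥ v := by
  rw [star_mulVec, ← dotProduct_mulVec, mulVec_mulVec]

theorem trace_mul_smul_vecMulVec_star_mul_conjTranspose {m : Type*} [Fintype m]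
    (H : Matrix m n ℂ) (c : ℂ) (v : n → ℂ) :
    (H * (c • vecMulVec v (star v)) * Hᴴ).trace = c * (star v ⬝ᵥ (Hᴴ * H) *ᵥ v) := by
  rw [mul_smul_vecMulVec_star_mul_conjTranspose, trace_smul, trace_vecMulVec, dotProduct_comm,
    star_mulVec_dotProduct_mulVec, smul_eq_mul]

theorem det_one_add_smul_vecMulVec [DecidableEq n] (c : ℂ) (u w : n → ℂ) :
    (1 + c • vecMulVec u w).det = 1 + c * (w ⬝ᵥ u) := by
  rw [← smul_vecMulVec, vecMulVec_eq Unit, det_one_add_replicateCol_mul_replicateRow,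
    dotProduct_smul, smul_eq_mul]

theorem det_one_add_mul_smul_vecMulVec_star_mul_conjTranspose {m : Type*} [Fintype m]
    [DecidableEq m] (H : Matrix m n ℂ) (c : ℂ) (v : n → ℂ) :
    (1 + H * (c • vecMulVec v (star v)) * Hᴴ).det = 1 + c * (star v ⬝ᵥ (Hᴴ * H) *ᵥ v) := by
  rw [mul_smul_vecMulVec_star_mul_conjTranspose, det_one_add_smul_vecMulVec,
    star_mulVec_dotProduct_mulVec]

variable [DecidableEq n]

theorem det_add_smul_vecMulVec_star {X : Matrix n n ℂ} (hX : IsUnit X.det) (c : ℂ) (z : n → ℂ) :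
    (X + c • vecMulVec z (star z)).det = X.det * (1 + c * (star z ⬝ᵥ X⁻¹ *ᵥ z)) := by
  rw [← smul_vecMulVec, vecMulVec_eq Unit, det_add_replicateCol_mul_replicateRow hX]
  congr 1
  rw [det_unique, add_apply, one_apply_eq, ← replicateRow_vecMul,
    replicateRow_mul_replicateCol_apply, ← dotProduct_mulVec, mulVec_smul, dotProduct_smul,
    smul_eq_mul]

theorem PosSemidef.star_dotProduct_inv_one_add_mulVec_le {B : Matrix n n ℂ} (hB : B.PosSemidef)
    (z : n → ℂ) : star z ⬝ᵥ (1 + B)⁻¹ *ᵥ z ≤ star z ⬝ᵥ z := by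
  set X := 1 + B
  have hXh : Xᴴ = X := by simp [X, hB.1.eq]
  have hXu : IsUnit X.det := (PosDef.one.add_posSemidef hB).isUnit.map detMonoidHom
  set u := X⁻¹ *ᵥ z
  have hz : X *ᵥ u = z := by rw [mulVec_mulVec, mul_nonsing_inv X hXu, one_mulVec]
  -- with `z = X u`, the claim reads `uᴴ X u ≤ uᴴ X² u`, and `X² - X = B + BᴴB ⪰ 0`
  have hXX : (X * X - X).PosSemidef := by
    have : X * X - X = B + Bᴴ * B := by rw [hB.1.eq]; simp only [X]; noncomm_ring
    exact this ▸ hB.add (posSemidef_conjTranspose_mul_self B)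
  have key := hXX.dotProduct_mulVec_nonneg u
  rw [sub_mulVec, dotProduct_sub, sub_nonneg, ← mulVec_mulVec] at key
  rwa [← hz, star_mulVec, hXh, ← dotProduct_mulVec, ← dotProduct_mulVec]

theorem det_one_add_sum_smul_vecMulVec_star_le {ι : Type*} (c : ι → ℂ) (hc : ∀ i, 0 ≤ c i)
    (z : ι → n → ℂ) (s : Finset ι) :
    (1 + ∑ i ∈ s, c i • vecMulVec (z i) (star (z i))).det ≤
      ∏ i ∈ s, (1 + c i * (star (z i) ⬝ᵥ z i)) := by
  classical
  induction s using Finset.induction_on with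
  | empty => simp
  | insert j s hj ih =>
    set B := ∑ i ∈ s, c i • vecMulVec (z i) (star (z i))
    have hB : B.PosSemidef :=
      posSemidef_sum _ fun i _ => (posSemidef_vecMulVec_self_star (z i)).smul (hc i)
    have hX := PosDef.one.add_posSemidef hB
    have hj_le : 1 + c j * (star (z j) ⬝ᵥ (1 + B)⁻¹ *ᵥ z j) ≤ 1 + c j * (star (z j) ⬝ᵥ z j) := by
      gcongr
      · exact hc j
      · exact hB.star_dotProduct_inv_one_add_mulVec_le (z j)
    have hj_nonneg : 0 ≤ 1 + c j * (star (z j) ⬝ᵥ z j) := by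
      have := hc j
      have := dotProduct_star_self_nonneg (z j)
      positivity
    rw [Finset.sum_insert hj, ← add_assoc, add_right_comm,
      det_add_smul_vecMulVec_star (hX.isUnit.map detMonoidHom), Finset.prod_insert hj]
    calc (1 + B).det * (1 + c j * (star (z j) ⬝ᵥ (1 + B)⁻¹ *ᵥ z j))
        ≤ (1 + B).det * (1 + c j * (star (z j) ⬝ᵥ z j)) :=
          mul_le_mul_of_nonneg_left hj_le hX.det_pos.le
      _ ≤ (∏ i ∈ s, (1 + c i * (star (z i) ⬝ᵥ z i))) * (1 + c j * (star (z j) ⬝ᵥ z j)) :=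
          mul_le_mul_of_nonneg_right ih hj_nonneg
      _ = _ := mul_comm _ _

theorem mul_diagonal_mul_star_eq_sum (B : Matrix n n ℂ) (d : n → ℂ) :
    B * diagonal d * star B = ∑ i, d i • vecMulVec (B.col i) (star (B.col i)) := by
  ext a b
  rw [mul_apply, sum_apply]
  simp only [mul_diagonal, star_apply, smul_apply, vecMulVec_apply, col_apply, Pi.star_apply,
    smul_eq_mul]
  exact Finset.sum_congr rfl fun i _ => by ring

open scoped MatrixOrder in
theorem PosSemidef.det_one_add_mul_diagonal_le {T : Matrix n n ℂ} (hT : T.PosSemidef)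
    (d : n → ℂ) (hd : ∀ i, 0 ≤ d i) : (1 + T * diagonal d).det ≤ ∏ i, (1 + d i * T i i) := by
  obtain ⟨B, rfl⟩ := CStarAlgebra.nonneg_iff_eq_star_mul_self.mp hT.nonneg
  have hcol : ∀ i, star (B.col i) ⬝ᵥ B.col i = (star B * B) i i := fun i => by
    simp only [dotProduct, mul_apply, star_apply, col_apply, Pi.star_apply]
  rw [Matrix.mul_assoc, det_one_add_mul_comm, mul_diagonal_mul_star_eq_sum]
  simpa only [hcol] using det_one_add_sum_smul_vecMulVec_star_le d hd B.col Finset.univ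

theorem trace_star_mul_mul_unitary (U : unitaryGroup n ℂ) (S : Matrix n n ℂ) :
    (star (U : Matrix n n ℂ) * S * U).trace = S.trace := by
  rw [trace_mul_cycle, Unitary.mul_star_self_of_mem U.2, Matrix.one_mul]

section Eigenvectors

variable {A : Matrix n n ℂ} (hA : A.IsHermitian)

theorem IsHermitian.det_one_add_mul_eq (S : Matrix n n ℂ) :
    (1 + S * A).det = (1 + star (hA.eigenvectorUnitary : Matrix n n ℂ) * S *
      hA.eigenvectorUnitary * diagonal (fun i => (hA.eigenvalues i : ℂ))).det := by
  conv_lhs => rw [hA.spectral_theorem, Unitary.conjStarAlgAut_apply]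
  rw [← Matrix.mul_assoc, ← Matrix.mul_assoc, det_one_add_mul_comm, ← Matrix.mul_assoc,
    ← Matrix.mul_assoc]
  rfl

theorem IsHermitian.mulVec_eigenvectorBasis_eq_smul (i : n) :
    A *ᵥ ⇑(hA.eigenvectorBasis i) = (hA.eigenvalues i : ℂ) • ⇑(hA.eigenvectorBasis i) := by
  rw [hA.mulVec_eigenvectorBasis, RCLike.real_smul_eq_coe_smul (K := ℂ)]
  rfl

theorem IsHermitian.star_eigenvectorBasis_dotProduct (i j : n) :
    star ⇑(hA.eigenvectorBasis i) ⬝ᵥ ⇑(hA.eigenvectorBasis j) = if i = j then 1 else 0 := by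
  rw [dotProduct_comm, ← EuclideanSpace.inner_eq_star_dotProduct]
  exact orthonormal_iff_ite.1 hA.eigenvectorBasis.orthonormal i j

theorem IsHermitian.eigenvectorBasis_ne_zero (i : n) : ⇑(hA.eigenvectorBasis i) ≠ 0 := fun h0 => by
  simpa [h0] using hA.star_eigenvectorBasis_dotProduct i i

theorem IsHermitian.eigenvalues_le_of_ne_of_lt {h₁ h₂ : ℝ} {v : n → ℂ}
    (hv : A *ᵥ v = (h₁ : ℂ) • v)
    (hsecond : ∀ (w : n → ℂ) (c : ℝ), A *ᵥ w = (c : ℂ) • w → w ≠ 0 → star v ⬝ᵥ w = 0 → c ≤ h₂)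
    {i j : n} (hij : i ≠ j) (hi : h₂ < hA.eigenvalues i) : hA.eigenvalues j ≤ h₂ := by
  set u := fun k => ⇑(hA.eigenvectorBasis k)
  have hu : ∀ k, A *ᵥ u k = (hA.eigenvalues k : ℂ) • u k := hA.mulVec_eigenvectorBasis_eq_smul
  have hu0 : ∀ k, u k ≠ 0 := hA.eigenvectorBasis_ne_zero
  have hu_eq : ∀ k, h₂ < hA.eigenvalues k → hA.eigenvalues k = h₁ := fun k hk => by
    by_contra hne
    exact (hsecond _ _ (hu k) (hu0 k)
      (hA.star_dotProduct_eq_zero_of_mulVec_eq_smul hv (hu k) (Ne.symm hne))).not_gt hk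
  by_contra! hj
  set c := fun k => star v ⬝ᵥ u k
  by_cases hci : c i = 0
  · exact (hsecond _ _ (hu i) (hu0 i) hci).not_gt hi
  set w := c j • u i - c i • u j
  have hw : A *ᵥ w = (h₁ : ℂ) • w := by
    simp only [w, mulVec_sub, mulVec_smul, hu, hu_eq i hi, hu_eq j hj, smul_sub,
      smul_comm (h₁ : ℂ)]
  have hvw : star v ⬝ᵥ w = 0 := by
    simp only [w, dotProduct_sub, dotProduct_smul, smul_eq_mul, c, mul_comm, sub_self]
  have hw0 : w ≠ 0 := fun h0 => hci <| by
    have := congrArg (star (u j) ⬝ᵥ ·) h0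
    simpa [w, dotProduct_sub, dotProduct_smul, u, hA.star_eigenvectorBasis_dotProduct,
      Ne.symm hij] using this
  exact (hsecond w h₁ hw hw0 hvw).not_gt (hu_eq i hi ▸ hi)

theorem IsHermitian.exists_forall_ne_eigenvalues_le [Nonempty n] {h₁ h₂ : ℝ} {v : n → ℂ}
    (hv : A *ᵥ v = (h₁ : ℂ) • v)
    (hsecond : ∀ (w : n → ℂ) (c : ℝ), A *ᵥ w = (c : ℂ) • w → w ≠ 0 → star v ⬝ᵥ w = 0 → c ≤ h₂) :
    ∃ i₀, ∀ i ≠ i₀, hA.eigenvalues i ≤ h₂ := by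
  by_cases h : ∃ i₀, h₂ < hA.eigenvalues i₀
  · obtain ⟨i₀, hi₀⟩ := h
    exact ⟨i₀, fun i hi => hA.eigenvalues_le_of_ne_of_lt hv hsecond (Ne.symm hi) hi₀⟩
  · push Not at h
    exact ⟨Classical.arbitrary n, fun i _ => h i⟩

end Eigenvectors

theorem PosSemidef.det_one_add_mul_re_le {A : Matrix n n ℂ} (hA : A.PosSemidef) {h₁ h₂ : ℝ}
    (hh₁ : 0 < h₁) (hh₂ : 0 < h₂) (i₀ : n) (hi₀ : hA.1.eigenvalues i₀ ≤ h₁)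
    (hne : ∀ i ≠ i₀, hA.1.eigenvalues i ≤ h₂) {S : Matrix n n ℂ} (hS : S.PosSemidef)
    (hcap : S.trace.re ≤ 1 / h₂ - 1 / h₁) : (1 + S * A).det.re ≤ 1 + h₁ * S.trace.re := by
  set U := hA.1.eigenvectorUnitary
  set T := star (U : Matrix n n ℂ) * S * U
  have hT : T.PosSemidef := hS.conjTranspose_mul_mul_same (U : Matrix n n ℂ)
  have hTdiag : ∀ i, T i i = ((T i i).re : ℂ) := fun i =>
    Complex.eq_re_of_ofReal_le (r := 0) (by rw [Complex.ofReal_zero]; exact hT.diag_nonneg)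
  have htrace : ∑ i, (T i i).re = S.trace.re := by
    rw [← Complex.re_sum, ← trace_star_mul_mul_unitary U S]
    rfl
  have hdet := hT.det_one_add_mul_diagonal_le _
    fun i => Complex.zero_le_real.2 (hA.eigenvalues_nonneg i)
  have hprod : ∏ i, (1 + (hA.1.eigenvalues i : ℂ) * T i i) =
      ((∏ i, (1 + hA.1.eigenvalues i * (T i i).re) : ℝ) : ℂ) := by
    push_cast
    exact Finset.prod_congr rfl fun i _ => by rw [← hTdiag]
  rw [← hA.1.det_one_add_mul_eq, hprod] at hdet
  rw [← htrace] at hcap ⊢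
  exact (Complex.le_def.1 hdet).1.trans (prod_one_add_mul_le hh₁ hh₂ _ _ hA.eigenvalues_nonneg
    (fun i => (Complex.nonneg_iff.1 hT.diag_nonneg).1) i₀ hi₀ hne hcap)

theorem det_one_add_mul_mul_conjTranspose_re_le {m : Type*} [Fintype m] [DecidableEq m]
    [Nonempty n] (H : Matrix m n ℂ) {h₁ h₂ : ℝ} (hh₁ : 0 < h₁) (hh₂ : 0 < h₂) {v : n → ℂ}
    (hv : (Hᴴ * H) *ᵥ v = (h₁ : ℂ) • v)
    (hmax : ∀ (w : n → ℂ) (c : ℝ), (Hᴴ * H) *ᵥ w = (c : ℂ) • w → w ≠ 0 → c ≤ h₁)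
    (hsecond : ∀ (w : n → ℂ) (c : ℝ), (Hᴴ * H) *ᵥ w = (c : ℂ) • w → w ≠ 0 →
      star v ⬝ᵥ w = 0 → c ≤ h₂)
    {S : Matrix n n ℂ} (hS : S.PosSemidef) (hcap : S.trace.re ≤ 1 / h₂ - 1 / h₁) :
    (1 + H * S * Hᴴ).det.re ≤ 1 + h₁ * S.trace.re := by
  have hA := posSemidef_conjTranspose_mul_self H
  obtain ⟨i₀, hi₀⟩ := hA.1.exists_forall_ne_eigenvalues_le hv hsecond
  have hle := hmax _ _ (hA.1.mulVec_eigenvectorBasis_eq_smul i₀) (hA.1.eigenvectorBasis_ne_zero i₀)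
  rw [Matrix.mul_assoc, det_one_add_mul_comm, Matrix.mul_assoc]
  exact hA.det_one_add_mul_re_le hh₁ hh₂ i₀ hle hi₀ hS hcap

theorem isGreatest_log_det_one_add_mul_mul_conjTranspose {m : Type*} [Fintype m] [DecidableEq m]
    (H : Matrix m n ℂ) {h₁ h₂ P : ℝ} (hh₁ : 0 < h₁) (hh₂ : 0 < h₂) {v : n → ℂ}
    (hunit : star v ⬝ᵥ v = 1)
    (hv : (Hᴴ * H) *ᵥ v = (h₁ : ℂ) • v)
    (hmax : ∀ (w : n → ℂ) (c : ℝ), (Hᴴ * H) *ᵥ w = (c : ℂ) • w → w ≠ 0 → c ≤ h₁)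
    (hsecond : ∀ (w : n → ℂ) (c : ℝ), (Hᴴ * H) *ᵥ w = (c : ℂ) • w → w ≠ 0 →
      star v ⬝ᵥ w = 0 → c ≤ h₂)
    (hP : 0 ≤ P) (hcap : P ≤ 1 / h₂ - 1 / h₁) :
    IsGreatest {r : ℝ | ∃ S : Matrix n n ℂ, S.PosSemidef ∧ S.trace.re ≤ P ∧
      r = Real.log ((1 + H * S * Hᴴ).det.re)} (Real.log (1 + h₁ * P)) := by
  have hgain := star_dotProduct_mulVec_eq_of_mulVec_eq_smul hv hunit
  refine ⟨⟨(P : ℂ) • vecMulVec v (star v), ?_, ?_, ?_⟩, ?_⟩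
  · exact (posSemidef_vecMulVec_self_star v).smul (Complex.zero_le_real.2 hP)
  · rw [trace_smul, trace_vecMulVec, dotProduct_comm, hunit, smul_eq_mul, mul_one,
      Complex.ofReal_re]
  · rw [det_one_add_mul_smul_vecMulVec_star_mul_conjTranspose, hgain, mul_comm]
    norm_cast
  · rintro _ ⟨S, hS, htr, rfl⟩
    have : Nonempty n := by
      by_contra h
      simp [not_nonempty_iff.1 h] at hunit
    have hpos := (PosDef.one.add_posSemidef (hS.mul_mul_conjTranspose_same H)).det_pos
    refine Real.log_le_log (Complex.pos_iff.1 hpos).1 ?_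
    calc (1 + H * S * Hᴴ).det.re ≤ 1 + h₁ * S.trace.re :=
          det_one_add_mul_mul_conjTranspose_re_le H hh₁ hh₂ hv hmax hsecond hS (htr.trans hcap)
      _ ≤ 1 + h₁ * P := by gcongr

end Matrix

/-- If `P ≤ 1/h₂ − 1/h₁`, uniform power splitting with `ρ = Q/(h₁P)` and rank-one
beamforming harvests exactly `Q` and achieves the maximal flexible time-switching
rate `log(1 + h₁P − Q)`. -/
theorem stmt19 {M N : ℕ} (H : Matrix (Fin N) (Fin M) ℂ) (h1 h2 P Q : ℝ)
    (hP : 0 < P) (hh2 : 0 < h2) (hh12 : h2 ≤ h1)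
    (v1 : Fin M → ℂ) (hunit : ∑ i, Complex.normSq (v1 i) = 1)
    (heig : (Hᴴ * H) *ᵥ v1 = (h1 : ℂ) • v1)
    (hmax : ∀ (w : Fin M → ℂ) (c : ℝ), (Hᴴ * H) *ᵥ w = (c : ℂ) • w → w ≠ 0 → c ≤ h1)
    (hsecond : ∀ (w : Fin M → ℂ) (c : ℝ), (Hᴴ * H) *ᵥ w = (c : ℂ) • w → w ≠ 0 →
      star v1 ⬝ᵥ w = 0 → c ≤ h2)
    (hreg : P ≤ 1 / h2 - 1 / h1) (hQ0 : 0 ≤ Q) (hQ : Q ≤ h1 * P) :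
    (Q / (h1 * P)) *
        (H * ((P : ℂ) • vecMulVec v1 (star v1)) * Hᴴ).trace.re = Q ∧
    Real.log (1 + (1 - Q / (h1 * P)) * h1 * P) = Real.log (1 + h1 * P - Q) ∧
    Real.log ((1 + ((1 - Q / (h1 * P) : ℝ) : ℂ) •
        (H * ((P : ℂ) • vecMulVec v1 (star v1)) * Hᴴ)).det.re) =
      Real.log (1 + h1 * P - Q) ∧
    IsGreatest {r : ℝ | ∃ S' : Matrix (Fin M) (Fin M) ℂ, S'.PosSemidef ∧
        S'.trace.re ≤ P - Q / h1 ∧ r = Real.log ((1 + H * S' * Hᴴ).det.re)}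
      (Real.log (1 + h1 * P - Q)) := by
  have hh1 : 0 < h1 := hh2.trans_le hh12
  have hv1 : star v1 ⬝ᵥ v1 = 1 := by
    rw [← Complex.ofReal_one, ← hunit, Complex.ofReal_sum]
    simp only [dotProduct, Pi.star_apply, Complex.star_def, Complex.normSq_eq_conj_mul_self]
  have hgain := star_dotProduct_mulVec_eq_of_mulVec_eq_smul heig hv1
  refine ⟨?_, ?_, ?_, ?_⟩
  · rw [trace_mul_smul_vecMulVec_star_mul_conjTranspose, hgain, ← Complex.ofReal_mul,
      Complex.ofReal_re]
    field_simp
  · congr 1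
    field_simp
    ring
  · rw [← Matrix.smul_mul, ← Matrix.mul_smul, smul_smul,
      det_one_add_mul_smul_vecMulVec_star_mul_conjTranspose, hgain]
    norm_cast
    congr 1
    field_simp
    ring
  · have hPQ : 0 ≤ P - Q / h1 := by rw [sub_nonneg, div_le_iff₀ hh1]; linarith
    have h := isGreatest_log_det_one_add_mul_mul_conjTranspose H hh1 hh2 hv1 heig hmax hsecond
      hPQ (by linarith [div_nonneg hQ0 hh1.le])
    rwa [mul_sub, mul_div_cancel₀ _ hh1.ne', ← add_sub_assoc] at h
end
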